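/- arXiv:2411.07712 — 8 statements merged into one kernel-verified Lean document; each statement's English description precedes it below -/
import Mathlib

section
/- Let ū_x(x) = (2/3)·sgn(x)·|x|^{−1/3} for |x| ≤ 1 and ū_x(x) = 0 for |x| > 1. Then ū_x ∈ L²(ℝ) and there exists a constant C > 0 such that ‖ū_x(· + h) − ū_x‖_{L²(ℝ)} ≤ C h^{1/6} for all h ∈ (0, 2], i.e., ū_x ∈ B₂^{1/6}. -/
open MeasureTheory Set
open scoped ENNReal

noncomputable section CuspAux

namespace CuspAux

/-- The cusp derivative function. -/
def cusp : ℝ → ℝ := fun x => if |x| ≤ 1 then (2 / 3) * Real.sign x * |x| ^ (-(1 : ℝ) / 3) else 0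

/-- Truncated power profile. -/
def rho (a : ℝ) : ℝ → ℝ := fun x => if |x| ≤ a then (2 / 3) * |x| ^ (-(1 : ℝ) / 3) else 0

def M3 (h : ℝ) : ℝ → ℝ := fun x => if 2 * h < |x| ∧ |x| ≤ 1 then h * |x| ^ (-(4 : ℝ) / 3) else 0

def M4 (h : ℝ) : ℝ → ℝ := fun x => if 1 - h ≤ |x| ∧ |x| ≤ 1 + h then 1 else 0

lemma measurable_rpow_const (r : ℝ) : Measurable (fun x : ℝ => x ^ r) := by measurability

lemma measurable_abs_rpow (r : ℝ) : Measurable (fun x : ℝ => |x| ^ r) :=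
  (measurable_rpow_const r).comp measurable_abs

lemma measurable_sign : Measurable Real.sign := by
  have : Real.sign = fun r : ℝ => if r < 0 then (-1 : ℝ) else if 0 < r then 1 else 0 := by
    funext r; rfl
  rw [this]
  exact Measurable.ite (measurableSet_lt measurable_id measurable_const) measurable_const
    (Measurable.ite (measurableSet_lt measurable_const measurable_id) measurable_const
      measurable_const)

lemma measurable_cusp : Measurable cusp := by
  unfold cusp
  exact Measurable.ite (measurable_abs measurableSet_Iic)
    ((measurable_const.mul measurable_sign).mul (measurable_abs_rpow _)) measurable_const

lemma measurable_rho (a : ℝ) : Measurable (rho a) := by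
  unfold rho
  exact Measurable.ite (measurable_abs measurableSet_Iic)
    (measurable_const.mul (measurable_abs_rpow _)) measurable_const

lemma measurable_M3 (h : ℝ) : Measurable (M3 h) := by
  unfold M3
  refine Measurable.ite ?_ (measurable_const.mul (measurable_abs_rpow _)) measurable_const
  exact (measurable_abs measurableSet_Ioi).inter (measurable_abs measurableSet_Iic)

lemma measurable_M4 (h : ℝ) : Measurable (M4 h) := by
  unfold M4
  refine Measurable.ite ?_ measurable_const measurable_const
  exact (measurable_abs measurableSet_Ici).inter (measurable_abs measurableSet_Iic)

lemma rho_nonneg (a x : ℝ) : 0 ≤ rho a x := by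
  unfold rho; split_ifs with hx
  · positivity
  · exact le_refl 0

lemma M3_nonneg (h x : ℝ) (h0 : 0 ≤ h) : 0 ≤ M3 h x := by
  unfold M3; split_ifs with hx
  · positivity
  · exact le_refl 0

lemma M4_nonneg (h x : ℝ) : 0 ≤ M4 h x := by
  unfold M4; split_ifs with hx
  · norm_num
  · exact le_refl 0

/-- cube-root comparison via cubing -/
lemma cube_le (u b : ℝ) (hu : 0 ≤ u) (hb : 0 ≤ b) (h : u ≤ b ^ 3) : u ^ ((1 : ℝ)/3) ≤ b := by
  by_contra hc
  push_neg at hc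
  have h2 : b ^ (3 : ℕ) < (u ^ ((1 : ℝ)/3)) ^ (3 : ℕ) :=
    pow_lt_pow_left₀ hc hb (by norm_num)
  rw [← Real.rpow_natCast (u ^ ((1 : ℝ)/3)) 3, ← Real.rpow_mul hu] at h2
  norm_num at h2
  linarith

lemma inv_cube_le (u : ℝ) (hu : 8/27 ≤ u) : (2/3 : ℝ) * u ^ (-(1 : ℝ)/3) ≤ 1 := by
  have hu0 : (0 : ℝ) < u := by linarith
  have h1 : (2:ℝ)/3 ≤ u ^ ((1 : ℝ)/3) := by
    by_contra hc
    push_neg at hc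
    have h2 : (u ^ ((1 : ℝ)/3)) ^ (3 : ℕ) < ((2:ℝ)/3) ^ (3 : ℕ) :=
      pow_lt_pow_left₀ hc (Real.rpow_nonneg hu0.le _) (by norm_num)
    rw [← Real.rpow_natCast (u ^ ((1 : ℝ)/3)) 3, ← Real.rpow_mul hu0.le] at h2
    norm_num at h2
    linarith
  have h2 : u ^ (-(1 : ℝ)/3) = (u ^ ((1 : ℝ)/3))⁻¹ := by
    rw [neg_div, Real.rpow_neg hu0.le]
  rw [h2]
  have h3 : (0:ℝ) < u ^ ((1 : ℝ)/3) := lt_of_lt_of_le (by norm_num) h1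
  rw [mul_inv_le_iff₀ h3]
  linarith

/-- mean value bound for `t ^ (-1/3)` -/
lemma diff_rpow_le (u v : ℝ) (hu : 0 < u) (huv : u ≤ v) :
    |v ^ (-(1 : ℝ)/3) - u ^ (-(1 : ℝ)/3)| ≤ 1/3 * u ^ (-(4 : ℝ)/3) * (v - u) := by
  have hder : ∀ t ∈ Icc u v, HasDerivWithinAt (fun s : ℝ => s ^ (-(1 : ℝ)/3))
      ((-(1 : ℝ)/3) * t ^ (-(1 : ℝ)/3 - 1)) (Icc u v) t := by
    intro t ht
    exact (Real.hasDerivAt_rpow_const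
      (Or.inl (ne_of_gt (lt_of_lt_of_le hu ht.1)))).hasDerivWithinAt
  have hbound : ∀ t ∈ Icc u v, ‖(-(1 : ℝ)/3) * t ^ (-(1 : ℝ)/3 - 1)‖ ≤ 1/3 * u ^ (-(4 : ℝ)/3) := by
    intro t ht
    have ht0 : 0 < t := lt_of_lt_of_le hu ht.1
    have he : -(1 : ℝ)/3 - 1 = -(4 : ℝ)/3 := by norm_num
    rw [he, norm_mul, Real.norm_eq_abs, Real.norm_eq_abs,
      abs_of_nonneg (Real.rpow_nonneg ht0.le _)]
    have : |(-(1 : ℝ)/3)| = 1/3 := by rw [abs_of_nonpos (by norm_num)]; norm_num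
    rw [this]
    have := Real.rpow_le_rpow_of_nonpos hu ht.1 (by norm_num : (-(4:ℝ)/3) ≤ 0)
    nlinarith [Real.rpow_nonneg hu.le (-(4:ℝ)/3)]
  have key := (convex_Icc u v).norm_image_sub_le_of_norm_hasDerivWithin_le hder hbound
    (left_mem_Icc.2 huv) (right_mem_Icc.2 huv)
  rw [Real.norm_eq_abs, Real.norm_eq_abs, abs_of_nonneg (sub_nonneg.2 huv)] at key
  exact key

/-- Pointwise bound on `|cusp y|`. -/
lemma cusp_abs_le (y : ℝ) : |cusp y| ≤ (2/3 : ℝ) * |y| ^ (-(1 : ℝ)/3) := by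
  unfold cusp
  split_ifs with hy
  · have hs : |Real.sign y| ≤ 1 := by
      rcases Real.sign_apply_eq y with h | h | h <;> rw [h] <;> norm_num
    rw [abs_mul, abs_mul, abs_of_nonneg (Real.rpow_nonneg (abs_nonneg y) _)]
    have h1 : |(2:ℝ)/3| = 2/3 := by norm_num
    rw [h1]
    have h3 : (0:ℝ) ≤ |y| ^ (-(1 : ℝ)/3) := Real.rpow_nonneg (abs_nonneg y) _
    have h4 : (0:ℝ) ≤ |Real.sign y| := abs_nonneg _
    nlinarith
  · simp only [abs_zero]
    positivity

lemma cusp_le_rho (y : ℝ) : |cusp y| ≤ rho 1 y := by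
  unfold rho
  split_ifs with hy
  · exact cusp_abs_le y
  · unfold cusp; rw [if_neg hy]; simp

/-- unfolding of `cusp` at positive points -/
lemma cusp_pos (y : ℝ) (hy : 0 < y) :
    cusp y = if y ≤ 1 then (2/3 : ℝ) * y ^ (-(1 : ℝ)/3) else 0 := by
  unfold cusp
  rw [abs_of_pos hy, Real.sign_of_pos hy, mul_one]

/-- unfolding of `cusp` at negative points -/
lemma cusp_neg (y : ℝ) (hy : y < 0) :
    cusp y = if -y ≤ 1 then -((2/3 : ℝ) * (-y) ^ (-(1 : ℝ)/3)) else 0 := by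
  unfold cusp
  rw [abs_of_neg hy, Real.sign_of_neg hy]
  split_ifs with h <;> ring

/-- `2 ^ (4/3) ≤ 4` -/
lemma two_rpow_43_le : (2 : ℝ) ^ ((4 : ℝ)/3) ≤ 4 := by
  have h1 : (4 : ℝ)/3 = 4 * (1/3 : ℝ) := by norm_num
  have h2 : ((2:ℝ) ^ (4:ℝ)) = 16 := by
    rw [show (4:ℝ) = ((4:ℕ):ℝ) by norm_num, Real.rpow_natCast]; norm_num
  rw [h1, Real.rpow_mul (by norm_num : (0:ℝ) ≤ 2), h2]
  have := cube_le 16 4 (by norm_num) (by norm_num) (by norm_num)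
  simpa using this

/-- The key pointwise estimate. -/
lemma pointwise (h x : ℝ) (h0 : 0 < h) :
    |cusp (x + h) - cusp x| ≤ rho (2*h) x + rho (3*h) (x + h) + M3 h x + M4 h x := by
  have hM3 := M3_nonneg h x h0.le
  have hM4 := M4_nonneg h x
  have hR1 := rho_nonneg (2*h) x
  have hR2 := rho_nonneg (3*h) (x + h)
  rcases le_or_gt |x| (2*h) with hA | hA
  · -- near the origin: crude triangle bound
    have h1 : |cusp x| ≤ rho (2*h) x := by
      unfold rho; rw [if_pos hA]; exact cusp_abs_le x
    have h2 : |cusp (x + h)| ≤ rho (3*h) (x + h) := by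
      have hxh : |x + h| ≤ 3 * h := by
        have := abs_add_le x h
        rw [abs_of_pos h0] at this
        linarith
      unfold rho; rw [if_pos hxh]; exact cusp_abs_le (x + h)
    have := abs_sub (cusp (x + h)) (cusp x)
    linarith
  · rcases abs_cases x with ⟨hxe, hx0⟩ | ⟨hxe, hx0⟩
    · -- x > 0
      have hxpos : 0 < x := by rw [hxe] at hA; linarith
      have hxh_pos : 0 < x + h := by linarith
      rw [cusp_pos x hxpos, cusp_pos (x + h) hxh_pos]
      rw [hxe] at hA
      by_cases hb1 : x + h ≤ 1
      · have hx1 : x ≤ 1 := by linarith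
        rw [if_pos hb1, if_pos hx1]
        have hm := diff_rpow_le x (x + h) hxpos (by linarith)
        have heq : (2/3 : ℝ) * (x+h) ^ (-(1 : ℝ)/3) - (2/3 : ℝ) * x ^ (-(1 : ℝ)/3)
            = (2/3 : ℝ) * ((x+h) ^ (-(1 : ℝ)/3) - x ^ (-(1 : ℝ)/3)) := by ring
        rw [heq, abs_mul, abs_of_nonneg (by norm_num : (0:ℝ) ≤ 2/3)]
        have hM3v : M3 h x = h * x ^ (-(4 : ℝ)/3) := by
          unfold M3
          rw [if_pos ⟨by rw [hxe]; exact hA, by rw [hxe]; exact hx1⟩, hxe]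
        have hx43 : (0:ℝ) ≤ x ^ (-(4 : ℝ)/3) := Real.rpow_nonneg hxpos.le _
        have : (2/3 : ℝ) * |(x+h) ^ (-(1 : ℝ)/3) - x ^ (-(1 : ℝ)/3)| ≤ h * x ^ (-(4 : ℝ)/3) := by
          have h' : (x + h) - x = h := by ring
          rw [h'] at hm
          nlinarith [abs_nonneg ((x+h) ^ (-(1 : ℝ)/3) - x ^ (-(1 : ℝ)/3))]
        rw [← hM3v] at this
        linarith
      · by_cases hx1 : x ≤ 1
        · rw [if_neg hb1, if_pos hx1]
          push_neg at hb1
          have hx23 : (2:ℝ)/3 < x := by linarith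
          have hb := inv_cube_le x (by linarith)
          have hM4v : M4 h x = 1 := by
            unfold M4
            rw [if_pos ⟨by rw [hxe]; linarith, by rw [hxe]; linarith⟩]
          have habs0 : |0 - (2/3 : ℝ) * x ^ (-(1 : ℝ)/3)| = (2/3 : ℝ) * x ^ (-(1 : ℝ)/3) := by
            rw [zero_sub, abs_neg]
            exact abs_of_nonneg (by positivity)
          rw [habs0, hM4v] at *
          linarith
        · rw [if_neg hb1, if_neg hx1]
          simp only [sub_zero, abs_zero]
          linarith
    · -- x < 0
      have hxneg : x < 0 := by rw [hxe] at hA; linarith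
      rw [hxe] at hA
      have hxh_neg : x + h < 0 := by linarith
      rw [cusp_neg x hxneg, cusp_neg (x + h) hxh_neg]
      set u : ℝ := -(x + h) with hu_def
      set v : ℝ := -x with hv_def
      have huv : u ≤ v := by simp [hu_def, hv_def]; linarith
      have hu0 : 0 < u := by simp [hu_def]; linarith
      have hv0 : 0 < v := by simp [hv_def]; linarith
      have hu_half : v/2 ≤ u := by simp [hu_def, hv_def]; linarith
      by_cases hc1 : v ≤ 1
      · have hc2 : u ≤ 1 := le_trans huv hc1
        rw [if_pos hc1, if_pos hc2]
        have hm := diff_rpow_le u v hu0 huv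
        have hvu : v - u = h := by simp only [hu_def, hv_def]; ring
        rw [hvu] at hm
        have heq : -((2/3 : ℝ) * u ^ (-(1 : ℝ)/3)) - -((2/3 : ℝ) * v ^ (-(1 : ℝ)/3))
            = (2/3 : ℝ) * (v ^ (-(1 : ℝ)/3) - u ^ (-(1 : ℝ)/3)) := by ring
        rw [heq, abs_mul, abs_of_nonneg (by norm_num : (0:ℝ) ≤ 2/3)]
        -- bound u ^ (-4/3) by 4 * v ^ (-4/3)
        have h1 : u ^ (-(4 : ℝ)/3) ≤ (v/2) ^ (-(4 : ℝ)/3) :=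
          Real.rpow_le_rpow_of_nonpos (by linarith) hu_half (by norm_num)
        have h2 : (v/2) ^ (-(4 : ℝ)/3) = v ^ (-(4 : ℝ)/3) * 2 ^ ((4 : ℝ)/3) := by
          rw [Real.div_rpow hv0.le (by norm_num : (0:ℝ) ≤ 2), div_eq_mul_inv,
            ← Real.rpow_neg (by norm_num : (0:ℝ) ≤ 2)]
          norm_num
        have hv43 : (0:ℝ) ≤ v ^ (-(4 : ℝ)/3) := Real.rpow_nonneg hv0.le _
        have h3 : u ^ (-(4 : ℝ)/3) ≤ 4 * v ^ (-(4 : ℝ)/3) := by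
          rw [h2] at h1
          nlinarith [two_rpow_43_le]
        have hM3v : M3 h x = h * v ^ (-(4 : ℝ)/3) := by
          unfold M3
          rw [if_pos ⟨by rw [hxe]; exact hA, by rw [hxe]; exact hc1⟩, hxe]
        have : (2/3 : ℝ) * |v ^ (-(1 : ℝ)/3) - u ^ (-(1 : ℝ)/3)| ≤ h * v ^ (-(4 : ℝ)/3) := by
          nlinarith [abs_nonneg (v ^ (-(1 : ℝ)/3) - u ^ (-(1 : ℝ)/3)),
            abs_abs (v ^ (-(1 : ℝ)/3) - u ^ (-(1 : ℝ)/3))]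
        rw [← hM3v] at this
        linarith
      · by_cases hc2 : u ≤ 1
        · rw [if_pos hc2, if_neg hc1]
          push_neg at hc1
          have hu_big : 8/27 ≤ u := by
            have : (1:ℝ)/2 < u := by linarith
            linarith
          have hb := inv_cube_le u hu_big
          have habs0 : |-((2/3 : ℝ) * u ^ (-(1 : ℝ)/3)) - 0| = (2/3 : ℝ) * u ^ (-(1 : ℝ)/3) := by
            rw [sub_zero, abs_neg]
            exact abs_of_nonneg (by positivity)
          have hM4v : M4 h x = 1 := by
            unfold M4
            refine if_pos ⟨?_, ?_⟩
            · rw [hxe]; simp only [hv_def] at hc1; linarith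
            · rw [hxe]; simp only [hu_def] at hc2; linarith
          rw [habs0, hM4v] at *
          linarith
        · rw [if_neg hc1, if_neg hc2]
          simp only [sub_zero, abs_zero]
          linarith


/-! ### Integration lemmas -/

/-- An even function integrable on `[0, ∞)` is integrable. -/
lemma integrable_even {F : ℝ → ℝ} (he : ∀ x, F (-x) = F x)
    (hF : IntegrableOn F (Ici (0:ℝ)) volume) : Integrable F volume := by
  have h1 : Integrable ((Ici (0:ℝ)).indicator F) volume :=
    (integrable_indicator_iff measurableSet_Ici).2 hF
  have h2 : Integrable (fun x => (Ici (0:ℝ)).indicator F (-x)) volume := h1.comp_neg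
  have h3 : (fun x => (Ici (0:ℝ)).indicator F (-x)) = (Iic (0:ℝ)).indicator F := by
    funext x
    by_cases hx : x ≤ 0
    · rw [indicator_of_mem (by simpa using hx : -x ∈ Ici (0:ℝ)),
        indicator_of_mem (by simpa using hx : x ∈ Iic (0:ℝ)), he]
    · rw [indicator_of_notMem (by simpa using hx), indicator_of_notMem (by simpa using hx)]
  rw [h3] at h2
  have h4 : IntegrableOn F (Iic (0:ℝ)) volume := (integrable_indicator_iff measurableSet_Iic).1 h2
  have h5 := h4.union hF
  rwa [Iic_union_Ici, integrableOn_univ] at h5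

lemma integral_comp_abs_indicator (g : ℝ → ℝ) (a b : ℝ) (ha : 0 ≤ a) :
    ∫ x : ℝ, (Ioc a b).indicator g |x| = 2 * ∫ t in Ioc a b, g t := by
  rw [integral_comp_abs (f := fun t => (Ioc a b).indicator g t)]
  congr 1
  rw [setIntegral_indicator measurableSet_Ioc,
    inter_eq_self_of_subset_right (fun t ht => mem_Ioi.2 (lt_of_le_of_lt ha ht.1))]

lemma integrable_comp_abs_indicator {g : ℝ → ℝ} {a b : ℝ}
    (hg : IntegrableOn g (Ioc a b) volume) :
    Integrable (fun x : ℝ => (Ioc a b).indicator g |x|) volume := by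
  refine integrable_even (fun x => by rw [abs_neg]) ?_
  have h1 : Integrable ((Ioc a b).indicator g) volume :=
    (integrable_indicator_iff measurableSet_Ioc).2 hg
  refine (h1.integrableOn).congr_fun ?_ measurableSet_Ici
  intro x hx
  simp only []
  rw [abs_of_nonneg hx]

lemma rho_sq_eq (a : ℝ) (x : ℝ) :
    (rho a x)^2 = (Ioc 0 a).indicator (fun t => (4/9 : ℝ) * t ^ (-(2 : ℝ)/3)) |x| := by
  unfold rho
  have hsq : (|x| ^ (-(1 : ℝ)/3))^2 = |x| ^ (-(2 : ℝ)/3) := by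
    rw [← Real.rpow_natCast (|x| ^ (-(1 : ℝ)/3)) 2, ← Real.rpow_mul (abs_nonneg x)]
    norm_num
  split_ifs with h1
  · rcases eq_or_lt_of_le (abs_nonneg x) with h0 | h0
    · have hx0 : |x| = 0 := h0.symm
      rw [hx0, Real.zero_rpow (by norm_num : (-(1:ℝ)/3) ≠ 0),
        indicator_of_notMem (fun hm => lt_irrefl (0:ℝ) hm.1)]
      ring
    · rw [indicator_of_mem (mem_Ioc.2 ⟨h0, h1⟩), mul_pow, hsq]
      norm_num
  · rw [indicator_of_notMem (fun hm => h1 hm.2)]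
    ring

lemma rho_sq_integrable (a : ℝ) (ha : 0 ≤ a) : Integrable (fun x => (rho a x)^2) volume := by
  have hg : IntegrableOn (fun t : ℝ => (4/9 : ℝ) * t ^ (-(2 : ℝ)/3)) (Ioc 0 a) volume := by
    have h1 : IntervalIntegrable (fun t : ℝ => t ^ (-(2 : ℝ)/3)) volume 0 a :=
      intervalIntegral.intervalIntegrable_rpow' (by norm_num)
    rw [intervalIntegrable_iff_integrableOn_Ioc_of_le ha] at h1
    exact h1.const_mul _
  simp_rw [rho_sq_eq a]
  exact integrable_comp_abs_indicator hg

lemma rho_sq_int (a : ℝ) (ha : 0 ≤ a) : ∫ x, (rho a x)^2 = 8/3 * a ^ ((1 : ℝ)/3) := by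
  simp_rw [rho_sq_eq a]
  rw [integral_comp_abs_indicator _ 0 a le_rfl, ← intervalIntegral.integral_of_le ha,
    intervalIntegral.integral_const_mul, integral_rpow (Or.inl (by norm_num : (-1:ℝ) < -(2:ℝ)/3))]
  have hE : (-(2:ℝ)/3 + 1) = (1:ℝ)/3 := by norm_num
  rw [hE, Real.zero_rpow (by norm_num : ((1:ℝ)/3) ≠ 0)]
  ring

lemma memLp_rho (a : ℝ) (ha : 0 ≤ a) : MemLp (rho a) 2 volume := by
  refine (memLp_two_iff_integrable_sq_norm (measurable_rho a).aestronglyMeasurable).2 ?_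
  simp_rw [Real.norm_eq_abs, sq_abs]
  exact rho_sq_integrable a ha

lemma M3_sq_eq (h : ℝ) (x : ℝ) :
    (M3 h x)^2 = (Ioc (2*h) 1).indicator (fun t => h^2 * t ^ (-(8 : ℝ)/3)) |x| := by
  unfold M3
  split_ifs with h1
  · rw [indicator_of_mem (mem_Ioc.2 h1), mul_pow]
    congr 1
    rw [← Real.rpow_natCast (|x| ^ (-(4 : ℝ)/3)) 2, ← Real.rpow_mul (abs_nonneg x)]
    norm_num
  · rw [indicator_of_notMem (fun hm => h1 ⟨hm.1, hm.2⟩)]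
    ring

lemma M3_sq_integrable (h : ℝ) (h0 : 0 < h) : Integrable (fun x => (M3 h x)^2) volume := by
  have hg : IntegrableOn (fun t : ℝ => h^2 * t ^ (-(8 : ℝ)/3)) (Ioc (2*h) 1) volume := by
    rcases le_or_gt (2*h) 1 with hle | hlt
    · have h1 : IntervalIntegrable (fun t : ℝ => t ^ (-(8 : ℝ)/3)) volume (2*h) 1 :=
        intervalIntegral.intervalIntegrable_rpow
          (Or.inr (notMem_uIcc_of_lt (by linarith) (by norm_num)))
      rw [intervalIntegrable_iff_integrableOn_Ioc_of_le hle] at h1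
      exact h1.const_mul _
    · rw [Ioc_eq_empty (by linarith : ¬ 2*h < 1)]
      exact integrableOn_empty
  simp_rw [M3_sq_eq h]
  exact integrable_comp_abs_indicator hg

lemma memLp_M3 (h : ℝ) (h0 : 0 < h) : MemLp (M3 h) 2 volume := by
  refine (memLp_two_iff_integrable_sq_norm (measurable_M3 h).aestronglyMeasurable).2 ?_
  simp_rw [Real.norm_eq_abs, sq_abs]
  exact M3_sq_integrable h h0

lemma M3_sq_int (h : ℝ) (h0 : 0 < h) : ∫ x, (M3 h x)^2 ≤ h ^ ((1 : ℝ)/3) := by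
  simp_rw [M3_sq_eq h]
  rw [integral_comp_abs_indicator _ (2*h) 1 (by linarith)]
  have h13 : (0:ℝ) ≤ h ^ ((1 : ℝ)/3) := Real.rpow_nonneg h0.le _
  rcases le_or_gt (2*h) 1 with hle | hlt
  · rw [← intervalIntegral.integral_of_le hle, intervalIntegral.integral_const_mul,
      integral_rpow (Or.inr ⟨by norm_num, notMem_uIcc_of_lt (by linarith) (by norm_num)⟩)]
    have hE : (-(8:ℝ)/3 + 1) = -((5:ℝ)/3) := by norm_num
    rw [hE, Real.one_rpow]
    set B : ℝ := (2*h) ^ (-((5:ℝ)/3)) with hB_def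
    have hB : B = 2 ^ (-((5:ℝ)/3)) * h ^ (-((5:ℝ)/3)) := by
      rw [hB_def, Real.mul_rpow (by norm_num) h0.le]
    have hh : h^2 * h ^ (-((5:ℝ)/3)) = h ^ ((1:ℝ)/3) := by
      rw [← Real.rpow_natCast h 2, ← Real.rpow_add h0]
      norm_num
    have h2inv : (2:ℝ) ^ (-((5:ℝ)/3)) ≤ 1/2 := by
      rw [Real.rpow_neg (by norm_num : (0:ℝ) ≤ 2)]
      have hgt : (2:ℝ) ≤ 2 ^ ((5:ℝ)/3) := by
        calc (2:ℝ) = 2 ^ (1:ℝ) := (Real.rpow_one 2).symm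
        _ ≤ 2 ^ ((5:ℝ)/3) := Real.rpow_le_rpow_of_exponent_le one_le_two (by norm_num)
      have := inv_anti₀ (by norm_num : (0:ℝ) < 2) hgt
      linarith
    have key : h^2 * B ≤ (1/2) * h ^ ((1:ℝ)/3) := by
      calc h^2 * B = (h^2 * h ^ (-((5:ℝ)/3))) * 2 ^ (-((5:ℝ)/3)) := by rw [hB]; ring
      _ ≤ (h^2 * h ^ (-((5:ℝ)/3))) * (1/2) := by
          refine mul_le_mul_of_nonneg_left h2inv ?_
          positivity
      _ = (1/2) * h ^ ((1:ℝ)/3) := by rw [hh]; ring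
    have hexp : 2 * (h ^ 2 * ((1 - B) / (-((5:ℝ)/3)))) = (6/5)*(h^2*B) - (6/5)*h^2 := by
      ring
    rw [hexp]
    nlinarith [sq_nonneg h]
  · rw [Ioc_eq_empty (by linarith : ¬ 2*h < 1)]
    simp only [Measure.restrict_empty, integral_zero_measure]
    linarith

lemma M4_sq_integrable (h : ℝ) (h0 : 0 < h) : Integrable (fun x => (M4 h x)^2) volume := by
  have hdom : Integrable ((Icc (-(1+h)) (1+h)).indicator (fun _ => (1:ℝ))) volume :=
    (integrable_indicator_iff measurableSet_Icc).2
      (integrableOn_const measure_Icc_lt_top.ne)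
  refine Integrable.mono' hdom (((measurable_M4 h).pow_const 2).aestronglyMeasurable) ?_
  filter_upwards with x
  show ‖(M4 h x)^2‖ ≤ (Icc (-(1+h)) (1+h)).indicator (fun _ => (1:ℝ)) x
  unfold M4
  split_ifs with hx
  · rw [one_pow, norm_one, indicator_of_mem (mem_Icc.2 (abs_le.1 hx.2))]
  · have hz : ((0:ℝ)^2) = 0 := by norm_num
    rw [hz, norm_zero]
    exact indicator_nonneg (fun _ _ => zero_le_one) x

lemma M4_sq_int (h : ℝ) (h0 : 0 < h) : ∫ x, (M4 h x)^2 ≤ 4 * h := by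
  have hint1 : Integrable ((Icc (1-h) (1+h)).indicator (fun _ => (1:ℝ))) volume :=
    (integrable_indicator_iff measurableSet_Icc).2 (integrableOn_const measure_Icc_lt_top.ne)
  have hint2 : Integrable ((Icc (-(1+h)) (-(1-h))).indicator (fun _ => (1:ℝ))) volume :=
    (integrable_indicator_iff measurableSet_Icc).2 (integrableOn_const measure_Icc_lt_top.ne)
  have hle : ∀ x, (M4 h x)^2 ≤ (Icc (1-h) (1+h)).indicator (fun _ => (1:ℝ)) x
      + (Icc (-(1+h)) (-(1-h))).indicator (fun _ => (1:ℝ)) x := by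
    intro x
    have hn1 : (0:ℝ) ≤ (Icc (1-h) (1+h)).indicator (fun _ => (1:ℝ)) x :=
      indicator_nonneg (fun _ _ => zero_le_one) x
    have hn2 : (0:ℝ) ≤ (Icc (-(1+h)) (-(1-h))).indicator (fun _ => (1:ℝ)) x :=
      indicator_nonneg (fun _ _ => zero_le_one) x
    unfold M4
    split_ifs with hx
    · rw [one_pow]
      rcases abs_cases x with ⟨he, h0x⟩ | ⟨he, h0x⟩
      · rw [he] at hx
        have : (Icc (1-h) (1+h)).indicator (fun _ => (1:ℝ)) x = 1 :=
          indicator_of_mem (mem_Icc.2 ⟨hx.1, hx.2⟩) _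
        linarith
      · rw [he] at hx
        have : (Icc (-(1+h)) (-(1-h))).indicator (fun _ => (1:ℝ)) x = 1 :=
          indicator_of_mem (mem_Icc.2 ⟨by linarith [hx.2], by linarith [hx.1]⟩) _
        linarith
    · have : (0:ℝ)^2 = 0 := by norm_num
      rw [this]
      linarith
  calc ∫ x, (M4 h x)^2
      ≤ ∫ x, ((Icc (1-h) (1+h)).indicator (fun _ => (1:ℝ)) x
        + (Icc (-(1+h)) (-(1-h))).indicator (fun _ => (1:ℝ)) x) :=
        integral_mono (M4_sq_integrable h h0) (hint1.add hint2) hle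
    _ = (∫ x, (Icc (1-h) (1+h)).indicator (fun _ => (1:ℝ)) x)
        + ∫ x, (Icc (-(1+h)) (-(1-h))).indicator (fun _ => (1:ℝ)) x :=
        integral_add hint1 hint2
    _ ≤ 4 * h := by
        rw [integral_indicator_const (1:ℝ) measurableSet_Icc,
          integral_indicator_const (1:ℝ) measurableSet_Icc, Real.volume_real_Icc_of_le (by linarith), Real.volume_real_Icc_of_le (by linarith),
          smul_eq_mul, smul_eq_mul, mul_one, mul_one]
        ring_nf
        linarith

lemma memLp_M4 (h : ℝ) (h0 : 0 < h) : MemLp (M4 h) 2 volume := by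
  refine (memLp_two_iff_integrable_sq_norm (measurable_M4 h).aestronglyMeasurable).2 ?_
  simp_rw [Real.norm_eq_abs, sq_abs]
  exact M4_sq_integrable h h0

lemma eLpNorm_le_of_sq {f : ℝ → ℝ} {b : ℝ} (hb : 0 ≤ b) (hm : MemLp f 2 volume)
    (hi : ∫ x, (f x)^2 ≤ b^2) : eLpNorm f 2 volume ≤ ENNReal.ofReal b := by
  rw [hm.eLpNorm_eq_integral_rpow_norm (by norm_num) (by norm_num)]
  apply ENNReal.ofReal_le_ofReal
  have ht : ((2:ℝ≥0∞)).toReal = (2:ℝ) := by simp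
  rw [ht]
  have hconv : (fun a : ℝ => ‖f a‖ ^ (2:ℝ)) = fun a => (f a)^2 := by
    funext a
    rw [show (2:ℝ) = ((2:ℕ):ℝ) by norm_num, Real.rpow_natCast, Real.norm_eq_abs, sq_abs]
  rw [hconv]
  have h0 : 0 ≤ ∫ x, (f x)^2 := integral_nonneg fun x => sq_nonneg _
  calc (∫ x, (f x)^2) ^ ((2:ℝ)⁻¹) ≤ (b^2) ^ ((2:ℝ)⁻¹) :=
      Real.rpow_le_rpow h0 hi (by norm_num)
    _ = b := by
      rw [← Real.rpow_natCast b 2, ← Real.rpow_mul hb]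
      norm_num


lemma memLp_R2 (h : ℝ) (h0 : 0 < h) : MemLp (fun x => rho (3*h) (x + h)) 2 volume := by
  refine (memLp_two_iff_integrable_sq_norm
    (((measurable_rho (3*h)).comp (measurable_add_const h)).aestronglyMeasurable)).2 ?_
  simp_rw [Real.norm_eq_abs, sq_abs]
  exact (rho_sq_integrable (3*h) (by linarith)).comp_add_right h

lemma R2_sq_int (h : ℝ) (h0 : 0 < h) :
    ∫ x, (rho (3*h) (x + h))^2 = 8/3 * (3*h) ^ ((1:ℝ)/3) := by
  rw [show (fun x => (rho (3*h) (x + h))^2) = fun x => (fun y => (rho (3*h) y)^2) (x + h) from rfl]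
  rw [integral_add_right_eq_self (fun y => (rho (3*h) y)^2) h]
  exact rho_sq_int (3*h) (by linarith)


end CuspAux

end CuspAux

/-- The cusp derivative `ū_x(x) = (2/3) sgn(x) |x|^{-1/3}` on `[-1,1]`, extended by `0`,
belongs to `L²(ℝ)` and to `B₂^{1/6}`. -/
theorem cusp_deriv_mem_B2sixth :
    MemLp (fun x : ℝ => if |x| ≤ 1 then (2 / 3) * Real.sign x * |x| ^ (-(1 : ℝ) / 3) else 0)
      2 volume ∧
    ∃ C : ℝ, 0 < C ∧ ∀ h ∈ Set.Ioc (0 : ℝ) 2,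
      eLpNorm
        (fun x : ℝ =>
          (if |x + h| ≤ 1 then (2 / 3) * Real.sign (x + h) * |x + h| ^ (-(1 : ℝ) / 3) else 0) -
          (if |x| ≤ 1 then (2 / 3) * Real.sign x * |x| ^ (-(1 : ℝ) / 3) else 0))
        2 volume ≤ ENNReal.ofReal (C * h ^ ((1 : ℝ) / 6)) := by
  constructor
  · show MemLp CuspAux.cusp 2 volume
    refine (CuspAux.memLp_rho 1 (by norm_num)).of_le
      CuspAux.measurable_cusp.aestronglyMeasurable ?_
    filter_upwards with x
    rw [Real.norm_eq_abs, Real.norm_eq_abs, abs_of_nonneg (CuspAux.rho_nonneg 1 x)]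
    exact CuspAux.cusp_le_rho x
  · refine ⟨8, by norm_num, ?_⟩
    rintro h ⟨h0, h2⟩
    set c := h ^ ((1:ℝ)/6) with hc_def
    have hc : (0:ℝ) ≤ c := Real.rpow_nonneg h0.le _
    have hc2 : c^2 = h ^ ((1:ℝ)/3) := by
      rw [hc_def, ← Real.rpow_natCast (h ^ ((1:ℝ)/6)) 2, ← Real.rpow_mul h0.le]
      norm_num
    have h13 : (0:ℝ) ≤ h ^ ((1:ℝ)/3) := Real.rpow_nonneg h0.le _
    have m1 : AEStronglyMeasurable (CuspAux.rho (2*h)) volume :=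
      (CuspAux.measurable_rho _).aestronglyMeasurable
    have m2 : AEStronglyMeasurable (fun x => CuspAux.rho (3*h) (x + h)) volume :=
      ((CuspAux.measurable_rho _).comp (measurable_add_const h)).aestronglyMeasurable
    have m3 : AEStronglyMeasurable (CuspAux.M3 h) volume :=
      (CuspAux.measurable_M3 h).aestronglyMeasurable
    have m4 : AEStronglyMeasurable (CuspAux.M4 h) volume :=
      (CuspAux.measurable_M4 h).aestronglyMeasurable
    have e1 : eLpNorm (CuspAux.rho (2*h)) 2 volume ≤ ENNReal.ofReal (2 * c) := by
      refine CuspAux.eLpNorm_le_of_sq (by positivity) (CuspAux.memLp_rho _ (by linarith)) ?_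
      rw [CuspAux.rho_sq_int _ (by linarith : (0:ℝ) ≤ 2*h)]
      have hsplit : (2*h) ^ ((1:ℝ)/3) = 2 ^ ((1:ℝ)/3) * h ^ ((1:ℝ)/3) :=
        Real.mul_rpow (by norm_num) h0.le
      have h213 : (2:ℝ) ^ ((1:ℝ)/3) ≤ 3/2 :=
        CuspAux.cube_le 2 (3/2) (by norm_num) (by norm_num) (by norm_num)
      rw [hsplit]
      nlinarith [mul_le_mul_of_nonneg_right h213 h13]
    have e2 : eLpNorm (fun x => CuspAux.rho (3*h) (x + h)) 2 volume ≤ ENNReal.ofReal (2 * c) := by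
      refine CuspAux.eLpNorm_le_of_sq (by positivity) (CuspAux.memLp_R2 h h0) ?_
      rw [CuspAux.R2_sq_int h h0]
      have hsplit : (3*h) ^ ((1:ℝ)/3) = 3 ^ ((1:ℝ)/3) * h ^ ((1:ℝ)/3) :=
        Real.mul_rpow (by norm_num) h0.le
      have h313 : (3:ℝ) ^ ((1:ℝ)/3) ≤ 3/2 :=
        CuspAux.cube_le 3 (3/2) (by norm_num) (by norm_num) (by norm_num)
      rw [hsplit]
      nlinarith [mul_le_mul_of_nonneg_right h313 h13]
    have e3 : eLpNorm (CuspAux.M3 h) 2 volume ≤ ENNReal.ofReal c := by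
      refine CuspAux.eLpNorm_le_of_sq hc (CuspAux.memLp_M3 h h0) ?_
      rw [hc2]
      exact CuspAux.M3_sq_int h h0
    have e4 : eLpNorm (CuspAux.M4 h) 2 volume ≤ ENNReal.ofReal (3 * c) := by
      refine CuspAux.eLpNorm_le_of_sq (by positivity) (CuspAux.memLp_M4 h h0) ?_
      have h4h := CuspAux.M4_sq_int h h0
      have hsplit : h ^ ((2:ℝ)/3) * h ^ ((1:ℝ)/3) = h := by
        rw [← Real.rpow_add h0]
        norm_num
      have hh23 : h ^ ((2:ℝ)/3) ≤ 2 := by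
        have hstep : h ^ ((2:ℝ)/3) ≤ 2 ^ ((2:ℝ)/3) := Real.rpow_le_rpow h0.le h2 (by norm_num)
        have hfin : (2:ℝ) ^ ((2:ℝ)/3) ≤ 2 := by
          have hrw : (2:ℝ) ^ ((2:ℝ)/3) = ((2:ℝ)^(2:ℝ)) ^ ((1:ℝ)/3) := by
            rw [← Real.rpow_mul (by norm_num : (0:ℝ) ≤ 2)]
            norm_num
          have h4 : ((2:ℝ)^(2:ℝ)) = 4 := by
            rw [show (2:ℝ) = ((2:ℕ):ℝ) from by norm_num, Real.rpow_natCast]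
            norm_num
          rw [hrw, h4]
          exact CuspAux.cube_le 4 2 (by norm_num) (by norm_num) (by norm_num)
        linarith
      nlinarith [mul_le_mul_of_nonneg_right hh23 h13]
    have hpt : ∀ x, ‖CuspAux.cusp (x + h) - CuspAux.cusp x‖ ≤
        (CuspAux.rho (2*h) + ((fun x => CuspAux.rho (3*h) (x + h)) + (CuspAux.M3 h + CuspAux.M4 h))) x := by
      intro x
      rw [Real.norm_eq_abs]
      have hp := CuspAux.pointwise h x h0
      simp only [Pi.add_apply]
      linarith
    show eLpNorm (fun x : ℝ => CuspAux.cusp (x + h) - CuspAux.cusp x) 2 volume ≤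
      ENNReal.ofReal (8 * c)
    calc eLpNorm (fun x : ℝ => CuspAux.cusp (x + h) - CuspAux.cusp x) 2 volume
        ≤ eLpNorm (CuspAux.rho (2*h) + ((fun x => CuspAux.rho (3*h) (x + h))
          + (CuspAux.M3 h + CuspAux.M4 h))) 2 volume := eLpNorm_mono_real hpt
      _ ≤ eLpNorm (CuspAux.rho (2*h)) 2 volume
          + eLpNorm ((fun x => CuspAux.rho (3*h) (x + h)) + (CuspAux.M3 h + CuspAux.M4 h)) 2 volume :=
          eLpNorm_add_le m1 (m2.add (m3.add m4)) (by norm_num)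
      _ ≤ eLpNorm (CuspAux.rho (2*h)) 2 volume
          + (eLpNorm (fun x => CuspAux.rho (3*h) (x + h)) 2 volume
            + eLpNorm (CuspAux.M3 h + CuspAux.M4 h) 2 volume) :=
          add_le_add (le_refl _) (eLpNorm_add_le m2 (m3.add m4) (by norm_num))
      _ ≤ eLpNorm (CuspAux.rho (2*h)) 2 volume
          + (eLpNorm (fun x => CuspAux.rho (3*h) (x + h)) 2 volume
            + (eLpNorm (CuspAux.M3 h) 2 volume + eLpNorm (CuspAux.M4 h) 2 volume)) :=
          add_le_add (le_refl _) (add_le_add (le_refl _) (eLpNorm_add_le m3 m4 (by norm_num)))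
      _ ≤ ENNReal.ofReal (2 * c) + (ENNReal.ofReal (2 * c)
          + (ENNReal.ofReal c + ENNReal.ofReal (3 * c))) :=
          add_le_add e1 (add_le_add e2 (add_le_add e3 e4))
      _ = ENNReal.ofReal (8 * c) := by
          rw [← ENNReal.ofReal_add hc (by positivity),
            ← ENNReal.ofReal_add (by positivity) (by positivity),
            ← ENNReal.ofReal_add (by positivity) (by positivity)]
          congr 1
          ring
end

section
/- Let f, g : ℝ → ℝ be Lipschitz continuous. Then for almost every x ∈ ℝ, the composition f ∘ g is differentiable at x with (f ∘ g)'(x) = f'(g(x))·g'(x), where the product f'(g(x))·g'(x) is interpreted as zero whenever g'(x) = 0, even if f is not differentiable at g(x). -/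
open MeasureTheory Set
open scoped NNReal ENNReal

open Asymptotics in
private lemma exists_r_aux (A : ℝ →L[ℝ] ℝ) :
    ∃ r : ℝ≥0, r ≠ 0 ∧ (A.det ≠ 0 →
      ∀ (s : Set ℝ) (φ : ℝ → ℝ), ApproximatesLinearOn φ A s r →
        ENNReal.ofReal (|A.det| / 2) * volume s ≤ volume (φ '' s)) := by
  by_cases h : A.det = 0
  · exact ⟨1, one_ne_zero, fun h' => absurd h h'⟩
  · have hpos : 0 < |A.det| := abs_pos.mpr h
    have hm : ((Real.toNNReal (|A.det| / 2) : ℝ≥0) : ℝ≥0∞) < ENNReal.ofReal |A.det| := by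
      show ENNReal.ofReal (|A.det| / 2) < ENNReal.ofReal |A.det|
      exact (ENNReal.ofReal_lt_ofReal_iff hpos).mpr (by linarith)
    have hev := MeasureTheory.mul_le_addHaar_image_of_lt_det (μ := volume) A hm
    obtain ⟨r, hr, hrpos⟩ := (hev.and self_mem_nhdsWithin).exists
    refine ⟨r, ?_, fun _ s φ hφ => ?_⟩
    · exact fun h0 => by simp [h0] at hrpos
    · exact hr s φ hφ

private lemma null_preimage_key (g : ℝ → ℝ) (N : Set ℝ) (hN : volume N = 0) :
    volume {x : ℝ | DifferentiableAt ℝ g x ∧ deriv g x ≠ 0 ∧ g x ∈ N} = 0 := by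
  set s := {x : ℝ | DifferentiableAt ℝ g x ∧ deriv g x ≠ 0 ∧ g x ∈ N} with hsdef
  choose r hr0 hr using exists_r_aux
  have hf' : ∀ x ∈ s, HasFDerivWithinAt g ((1 : ℝ →L[ℝ] ℝ).smulRight (deriv g x)) s x :=
    fun x hx => hx.1.hasDerivAt.hasFDerivAt.hasFDerivWithinAt
  obtain ⟨t, A, t_disj, t_meas, t_cover, t_approx, hA⟩ :=
    exists_partition_approximatesLinearOn_of_hasFDerivWithinAt g s
      (fun x => (1 : ℝ →L[ℝ] ℝ).smulRight (deriv g x)) hf' r hr0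
  rcases s.eq_empty_or_nonempty with h | h
  · simp [h]
  have hdet : ∀ n, (A n).det ≠ 0 := by
    intro n
    obtain ⟨y, hy, hAy⟩ := hA h n
    rw [hAy, ContinuousLinearMap.smulRight_one_eq_toSpanSingleton, ContinuousLinearMap.det_toSpanSingleton]
    exact hy.2.1
  have hnull : ∀ n, volume (s ∩ t n) = 0 := by
    intro n
    have h1 : ENNReal.ofReal (|(A n).det| / 2) * volume (s ∩ t n)
        ≤ volume (g '' (s ∩ t n)) := hr (A n) (hdet n) _ g (t_approx n)
    have h2 : volume (g '' (s ∩ t n)) = 0 :=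
      measure_mono_null (by rintro _ ⟨x, hx, rfl⟩; exact hx.1.2.2) hN
    rw [h2, nonpos_iff_eq_zero, mul_eq_zero] at h1
    rcases h1 with h1 | h1
    · exact absurd h1 (by
        simp only [ENNReal.ofReal_eq_zero, not_le]
        have := abs_pos.mpr (hdet n); linarith)
    · exact h1
  have : volume s ≤ ∑' n, volume (s ∩ t n) := by
    refine le_trans (measure_mono ?_) (measure_iUnion_le _)
    intro x hx
    obtain ⟨_, ⟨n, rfl⟩, hn⟩ := t_cover hx
    exact mem_iUnion.mpr ⟨n, hx, hn⟩
  simpa [hnull] using this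

open Asymptotics in
private lemma comp_hasDerivAt_zero {f g : ℝ → ℝ} {Kf : NNReal} (hf : LipschitzWith Kf f)
    {x : ℝ} (hg : HasDerivAt g 0 x) : HasDerivAt (fun y => f (g y)) 0 x := by
  rw [hasDerivAt_iff_isLittleO] at hg ⊢
  simp only [smul_zero, sub_zero] at hg ⊢
  have hO : (fun y => f (g y) - f (g x)) =O[nhds x] fun y => g y - g x := by
    rw [isBigO_iff]
    refine ⟨Kf, Filter.Eventually.of_forall fun y => ?_⟩
    have := hf.dist_le_mul (g y) (g x)
    simpa [Real.dist_eq, abs_mul] using this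
  exact hO.trans_isLittleO hg

/-- Chain rule a.e. for compositions of Lipschitz functions: for a.e. `x`,
`(f ∘ g)'(x) = f'(g(x)) · g'(x)`, where the product is interpreted as `0`
whenever `g'(x) = 0`, even if `f` is not differentiable at `g(x)`. -/
theorem lipschitz_chain_rule_ae
    (f g : ℝ → ℝ) (Kf Kg : NNReal)
    (hf : LipschitzWith Kf f) (hg : LipschitzWith Kg g) :
    ∀ᵐ x : ℝ ∂volume,
      (deriv g x = 0 → HasDerivAt (fun y => f (g y)) 0 x) ∧
      (deriv g x ≠ 0 →
        HasDerivAt (fun y => f (g y)) (deriv f (g x) * deriv g x) x) := by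
  have hgd : ∀ᵐ x : ℝ ∂volume, DifferentiableAt ℝ g x := hg.ae_differentiableAt
  have hN : volume {y : ℝ | ¬ DifferentiableAt ℝ f y} = 0 := by
    have := hf.ae_differentiableAt (μ := volume)
    rwa [MeasureTheory.ae_iff] at this
  have hkey := null_preimage_key g _ hN
  have hkey' : ∀ᵐ x : ℝ ∂volume,
      ¬ (DifferentiableAt ℝ g x ∧ deriv g x ≠ 0 ∧ ¬ DifferentiableAt ℝ f (g x)) := by
    rw [MeasureTheory.ae_iff]
    simpa using hkey
  filter_upwards [hgd, hkey'] with x hxg hxk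
  constructor
  · intro h0
    exact comp_hasDerivAt_zero hf (h0 ▸ hxg.hasDerivAt)
  · intro hne
    have hfd : DifferentiableAt ℝ f (g x) := by
      by_contra hc
      exact hxk ⟨hxg, hne, hc⟩
    exact (hfd.hasDerivAt.comp x hxg.hasDerivAt :)
end

section
/- Let f ∈ L¹(ℝ) and let g : ℝ → ℝ be Lipschitz continuous and monotone increasing. Then (f ∘ g)·g' ∈ L¹(ℝ), and for all κ, γ ∈ ℝ the change of variables formula ∫_{g(κ)}^{g(γ)} f(x) dx = ∫_κ^γ f(g(s))·g'(s) ds holds. -/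
open MeasureTheory Set intervalIntegral

/-- Change of variables: if `f ∈ L¹(ℝ)` and `g` is Lipschitz and increasing, then
`(f ∘ g)·g' ∈ L¹(ℝ)` and `∫_{g(κ)}^{g(γ)} f = ∫_κ^γ f(g(s)) g'(s) ds` for all `κ, γ`. -/
theorem change_of_variables_lipschitz_monotone
    (f g : ℝ → ℝ) (K : NNReal)
    (hf : Integrable f volume)
    (hg : LipschitzWith K g) (hmono : Monotone g) :
    Integrable (fun s => f (g s) * deriv g s) volume ∧
    ∀ κ γ : ℝ,
      (∫ x in (g κ)..(g γ), f x) = ∫ s in κ..γ, f (g s) * deriv g s := by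
  set F : ℝ → ℝ := fun s => f (g s) * deriv g s with hF
  set s : Set ℝ := {x | 0 < deriv g x} with hsdef
  have hs : MeasurableSet s := measurableSet_lt measurable_const (measurable_deriv g)
  -- on s, g is differentiable
  have hdiff : ∀ x ∈ s, DifferentiableAt ℝ g x := by
    intro x hx
    by_contra h
    rw [hsdef, mem_setOf_eq, deriv_zero_of_not_differentiableAt h] at hx
    exact lt_irrefl 0 hx
  -- the derivative of a monotone function is nonnegative
  have hnn : ∀ x, 0 ≤ deriv g x := by
    intro x
    by_cases h : DifferentiableAt ℝ g x
    · have ht : Filter.Tendsto (slope g x) (nhdsWithin x (Ioi x)) (nhds (deriv g x)) :=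
        (hasDerivAt_iff_tendsto_slope.1 h.hasDerivAt).mono_left
          (nhdsWithin_mono x (fun t ht => Set.mem_compl_singleton_iff.mpr (show x < t from ht).ne'))
      refine ge_of_tendsto ht ?_
      filter_upwards [self_mem_nhdsWithin] with t ht
      rw [slope_def_field]
      exact div_nonneg (sub_nonneg.2 (hmono (le_of_lt ht))) (sub_nonneg.2 (le_of_lt ht))
    · simp [deriv_zero_of_not_differentiableAt h]
  -- g is injective on s
  have hInj : InjOn g s := by
    have key : ∀ x ∈ s, ∀ y ∈ s, g x = g y → x < y → False := by
      intro x hx y _ hxy hlt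
      have hconst : ∀ t ∈ Icc x y, g t = g x := fun t ht =>
        le_antisymm (hxy ▸ hmono ht.2) (hmono ht.1)
      have hud : UniqueDiffWithinAt ℝ (Icc x y) x :=
        (uniqueDiffOn_Icc hlt) x (left_mem_Icc.2 hlt.le)
      have h1 : HasDerivWithinAt g (deriv g x) (Icc x y) x :=
        (hdiff x hx).hasDerivAt.hasDerivWithinAt
      have h2 : HasDerivWithinAt g 0 (Icc x y) x :=
        (hasDerivWithinAt_const x (Icc x y) (g x)).congr
          (fun t ht => hconst t ht) (hconst x (left_mem_Icc.2 hlt.le))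
      have := h1.derivWithin hud
      rw [h2.derivWithin hud] at this
      exact (ne_of_gt (show (0:ℝ) < deriv g x from hx)) this.symm
    intro x hx y hy hxy
    by_contra hne
    rcases lt_or_gt_of_ne hne with h | h
    · exact key x hx y hy hxy h
    · exact key y hy x hx hxy.symm h
  have hderivs : ∀ x ∈ s, HasDerivWithinAt g (deriv g x) s x := fun x hx =>
    (hdiff x hx).hasDerivAt.hasDerivWithinAt
  -- F vanishes off s, so F = s.indicator F
  have hsupp : Function.support F ⊆ s := by
    intro x hx
    have hd : deriv g x ≠ 0 := fun h => hx (by simp [hF, h])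
    exact lt_of_le_of_ne (hnn x) (Ne.symm hd)
  have hFind : s.indicator F = F := indicator_eq_self.2 hsupp
  -- Lipschitz functions map null sets to null sets
  have hlip_null : ∀ N : Set ℝ, volume N = 0 → volume (g '' N) = 0 := by
    intro N hN
    have h1 := hg.hausdorffMeasure_image_le zero_le_one N
    simp only [MeasureTheory.hausdorffMeasure_real] at h1
    refine le_antisymm ?_ zero_le
    calc volume (g '' N) ≤ (K : ENNReal) ^ (1 : ℝ) * volume N := h1
      _ = 0 := by rw [hN, mul_zero]
  -- the nondifferentiability set is null, and so is its image
  have hN : volume {x | ¬ DifferentiableAt ℝ g x} = 0 := by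
    have := hg.ae_differentiableAt_real
    rwa [MeasureTheory.ae_iff] at this
  have hgN : volume (g '' {x | ¬ DifferentiableAt ℝ g x}) = 0 :=
    hlip_null _ hN
  -- Sard: the image of the set where the derivative vanishes is null
  set T : Set ℝ := {x | DifferentiableAt ℝ g x ∧ deriv g x = 0} with hTdef
  have hgT : volume (g '' T) = 0 := by
    refine MeasureTheory.addHaar_image_eq_zero_of_det_fderivWithin_eq_zero
      (f' := fun x => ContinuousLinearMap.smulRight (1 : ℝ →L[ℝ] ℝ) (deriv g x))
      volume (fun x hx => hx.1.hasDerivAt.hasDerivWithinAt.hasFDerivWithinAt) ?_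
    intro x hx
    rw [ContinuousLinearMap.smulRight_one_eq_toSpanSingleton,
      ContinuousLinearMap.det_toSpanSingleton, hx.2]
  -- Part 1: integrability
  have key := (MeasureTheory.integrableOn_image_iff_integrableOn_abs_deriv_smul
    hs hderivs hInj f).1 hf.integrableOn
  have hFs : IntegrableOn F s := by
    refine key.congr_fun (fun x hx => ?_) hs
    simp only [smul_eq_mul, hF]
    rw [abs_of_pos hx, mul_comm]
  have hint : Integrable F volume := by
    have := hFs.integrable_indicator hs
    rwa [hFind] at this
  refine ⟨hint, ?_⟩
  -- Part 2: the change of variables formula, first for κ ≤ γ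
  have main : ∀ κ γ : ℝ, κ ≤ γ →
      (∫ x in (g κ)..(g γ), f x) = ∫ t in κ..γ, F t := by
    intro κ γ hκγ
    set A : Set ℝ := Ioo κ γ ∩ s with hAdef
    have hA : MeasurableSet A := measurableSet_Ioo.inter hs
    have hderivA : ∀ x ∈ A, HasDerivWithinAt g (deriv g x) A x := fun x hx =>
      (hdiff x hx.2).hasDerivAt.hasDerivWithinAt
    have hInjA : InjOn g A := hInj.mono inter_subset_right
    -- the image g '' A is a.e. equal to Ioc (g κ) (g γ)
    have hsub : g '' A ⊆ Icc (g κ) (g γ) := by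
      rintro y ⟨x, hx, rfl⟩
      exact ⟨hmono hx.1.1.le, hmono hx.1.2.le⟩
    have hmem : Ioc (g κ) (g γ) =ᶠ[ae volume] g '' A := by
      rw [MeasureTheory.ae_eq_set]
      constructor
      · -- Ioc \ g '' A is null
        have hsub2 : Ioc (g κ) (g γ) \ g '' A ⊆
            ({g γ} : Set ℝ) ∪ (g '' {x | ¬ DifferentiableAt ℝ g x} ∪ g '' T) := by
          rintro y ⟨hy1, hy2⟩
          by_cases hyγ : y = g γ
          · exact Or.inl hyγ
          have hyIoo : y ∈ Ioo (g κ) (g γ) := ⟨hy1.1, lt_of_le_of_ne hy1.2 hyγ⟩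
          obtain ⟨x, hxIcc, hgx⟩ :=
            intermediate_value_Icc hκγ hg.continuous.continuousOn
              ⟨hyIoo.1.le, hyIoo.2.le⟩
          have hxκ : κ < x := by
            by_contra h
            push_neg at h
            have : y ≤ g κ := hgx ▸ hmono h
            exact absurd hyIoo.1 (not_lt.2 this)
          have hxγ : x < γ := by
            by_contra h
            push_neg at h
            have : g γ ≤ y := hgx ▸ hmono h
            exact absurd hyIoo.2 (not_lt.2 this)
          have hxns : x ∉ s := by
            intro hxs
            exact hy2 ⟨x, ⟨⟨hxκ, hxγ⟩, hxs⟩, hgx⟩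
          have hd0 : deriv g x = 0 :=
            le_antisymm (not_lt.1 hxns) (hnn x)
          by_cases hdx : DifferentiableAt ℝ g x
          · exact Or.inr (Or.inr ⟨x, ⟨hdx, hd0⟩, hgx⟩)
          · exact Or.inr (Or.inl ⟨x, hdx, hgx⟩)
        refine measure_mono_null hsub2 ?_
        refine measure_union_null (measure_singleton _) (measure_union_null hgN hgT)
      · -- g '' A \ Ioc is null
        refine measure_mono_null (fun y hy => ?_) (measure_singleton (g κ))
        have h1 := hsub hy.1
        have h2 := hy.2
        simp only [mem_Ioc, not_and_or, not_lt, not_le] at h2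
        rcases h2 with h2 | h2
        · exact le_antisymm h2 h1.1
        · exact absurd h1.2 (not_le.2 h2)
    -- compute both sides
    have hgκγ : g κ ≤ g γ := hmono hκγ
    rw [intervalIntegral.integral_of_le hgκγ, intervalIntegral.integral_of_le hκγ]
    calc ∫ x in Ioc (g κ) (g γ), f x
        = ∫ x in g '' A, f x := setIntegral_congr_set hmem
      _ = ∫ x in A, |deriv g x| • f (g x) :=
          MeasureTheory.integral_image_eq_integral_abs_deriv_smul hA hderivA hInjA f
      _ = ∫ x in A, F x := by
          refine setIntegral_congr_fun hA (fun x hx => ?_)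
          simp only [smul_eq_mul, hF]
          rw [abs_of_pos hx.2, mul_comm]
      _ = ∫ x in Ioc κ γ ∩ s, F x := by
          exact setIntegral_congr_set
            (MeasureTheory.ae_eq_set_inter Ioo_ae_eq_Ioc (ae_eq_refl s))
      _ = ∫ x in Ioc κ γ, s.indicator F x := (setIntegral_indicator hs).symm
      _ = ∫ x in Ioc κ γ, F x := by rw [hFind]
  intro κ γ
  rcases le_total κ γ with h | h
  · exact main κ γ h
  · rw [intervalIntegral.integral_symm γ κ, intervalIntegral.integral_symm (g γ) (g κ),
      main γ κ h]
end

section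
/- Let G : ℝ → ℝ be bounded, increasing, and left-continuous with lim_{x→−∞} G(x) = 0. Define y(ξ) = sup{x ∈ ℝ : x + G(x) < ξ}. Then for every ξ ∈ ℝ, y(ξ) + G(y(ξ)) ≤ ξ ≤ y(ξ) + G(y(ξ)+), where G(x+) denotes the right limit of G at x. In particular, G(y(ξ)) ≤ ξ − y(ξ) ≤ G(y(ξ)+). -/
open Set Function Filter Topology

/-! Put `F x = x + G x`, which is monotone, so `y(ξ)` is the supremum of the sublevel set
`{F < ξ}`. Points left of `y(ξ)` lie in that set and points right of it do not; letting them
tend to `y(ξ)` gives `F (y ξ) ≤ ξ` by left continuity and `ξ ≤ y ξ + G(y(ξ)+)` through the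
right limit. The bound on `G` makes the sublevel set nonempty and bounded above. -/

section SupOfSublevelSet

variable {α β : Type*} [ConditionallyCompleteLinearOrder α] [LinearOrder β] {F : α → β} {ξ : β}

theorem Monotone.lt_of_lt_sSup_setOf_lt (hF : Monotone F) (hne : {x | F x < ξ}.Nonempty)
    {x : α} (hx : x < sSup {x | F x < ξ}) : F x < ξ := by
  obtain ⟨s, hs, hxs⟩ := exists_lt_of_lt_csSup hne hx
  exact (hF hxs.le).trans_lt hs

theorem le_of_sSup_setOf_lt_lt (hbdd : BddAbove {x | F x < ξ}) {x : α}
    (hx : sSup {x | F x < ξ} < x) : ξ ≤ F x :=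
  not_lt.1 fun h => (le_csSup hbdd h).not_gt hx

variable [TopologicalSpace α] [OrderTopology α] [TopologicalSpace β] [OrderClosedTopology β]

theorem Monotone.apply_sSup_setOf_lt_le [DenselyOrdered α] [NoMinOrder α] (hF : Monotone F)
    (hne : {x | F x < ξ}.Nonempty)
    (hcont : ContinuousWithinAt F (Iio (sSup {x | F x < ξ})) (sSup {x | F x < ξ})) :
    F (sSup {x | F x < ξ}) ≤ ξ :=
  _root_.le_of_tendsto hcont.tendsto <| eventually_nhdsWithin_of_forall fun _ hx =>
    (hF.lt_of_lt_sSup_setOf_lt hne hx).le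

theorem le_of_tendsto_nhdsGT_sSup_setOf_lt [DenselyOrdered α] [NoMaxOrder α]
    (hbdd : BddAbove {x | F x < ξ}) {L : β}
    (hF : Tendsto F (𝓝[>] sSup {x | F x < ξ}) (𝓝 L)) : ξ ≤ L :=
  ge_of_tendsto hF <| eventually_nhdsWithin_of_forall fun _ hx => le_of_sSup_setOf_lt_lt hbdd hx

end SupOfSublevelSet

section BoundedPerturbation

variable {G : ℝ → ℝ} {M : ℝ}

theorem nonempty_setOf_add_lt (hM : ∀ x, |G x| ≤ M) (ξ : ℝ) :
    {x | x + G x < ξ}.Nonempty :=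
  ⟨ξ - M - 1, show _ < ξ by linarith [(abs_le.1 (hM (ξ - M - 1))).2]⟩

theorem bddAbove_setOf_add_lt (hM : ∀ x, |G x| ≤ M) (ξ : ℝ) :
    BddAbove {x | x + G x < ξ} :=
  ⟨ξ + M, fun x (hx : x + G x < ξ) => by linarith [(abs_le.1 (hM x)).1]⟩

end BoundedPerturbation

theorem lagrangian_char_bracket_general
    (G : ℝ → ℝ)
    (hbdd : ∃ M : ℝ, ∀ x, |G x| ≤ M)
    (hmono : Monotone G)
    (hleft : ∀ x : ℝ, ContinuousWithinAt G (Set.Iio x) x)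
    (y : ℝ → ℝ) (hy : ∀ ξ, y ξ = sSup {x : ℝ | x + G x < ξ}) :
    ∀ ξ : ℝ,
      (y ξ + G (y ξ) ≤ ξ ∧ ξ ≤ y ξ + Function.rightLim G (y ξ)) ∧
      (G (y ξ) ≤ ξ - y ξ ∧ ξ - y ξ ≤ Function.rightLim G (y ξ)) := by
  intro ξ
  obtain ⟨M, hM⟩ := hbdd
  have hF : Monotone fun x => x + G x := monotone_id.add hmono
  have hF_left : ContinuousWithinAt (fun x => x + G x) (Iio (y ξ)) (y ξ) :=
    continuousWithinAt_id.add (hleft _)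
  have hF_right : Tendsto (fun x => x + G x) (𝓝[>] y ξ) (𝓝 (y ξ + rightLim G (y ξ))) :=
    tendsto_nhdsWithin_of_tendsto_nhds tendsto_id |>.add (hmono.tendsto_rightLim _)
  rw [hy] at hF_left hF_right ⊢
  have lower := hF.apply_sSup_setOf_lt_le (nonempty_setOf_add_lt hM ξ) hF_left
  have upper := le_of_tendsto_nhdsGT_sSup_setOf_lt (bddAbove_setOf_add_lt hM ξ) hF_right
  exact ⟨⟨lower, upper⟩, by linarith, by linarith⟩

/-- For `G` bounded, increasing, left-continuous with `G → 0` at `−∞`, and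
`y(ξ) = sup{x : x + G(x) < ξ}`, one has
`y(ξ) + G(y(ξ)) ≤ ξ ≤ y(ξ) + G(y(ξ)+)`, hence `G(y(ξ)) ≤ ξ − y(ξ) ≤ G(y(ξ)+)`. -/
theorem lagrangian_char_bracket
    (G : ℝ → ℝ)
    (hbdd : ∃ M : ℝ, ∀ x, |G x| ≤ M)
    (hmono : Monotone G)
    (hleft : ∀ x : ℝ, ContinuousWithinAt G (Set.Iio x) x)
    (hlim : Tendsto G atBot (nhds 0))
    (y : ℝ → ℝ) (hy : ∀ ξ, y ξ = sSup {x : ℝ | x + G x < ξ}) :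
    ∀ ξ : ℝ,
      (y ξ + G (y ξ) ≤ ξ ∧ ξ ≤ y ξ + Function.rightLim G (y ξ)) ∧
      (G (y ξ) ≤ ξ - y ξ ∧ ξ - y ξ ≤ Function.rightLim G (y ξ)) :=
  lagrangian_char_bracket_general G hbdd hmono hleft y hy
end

section
/- Let y, y_Δ : ℝ → ℝ be continuous, increasing functions with y − id and y_Δ − id bounded, and suppose lim_{ξ→±∞}(y(ξ) − y_Δ(ξ)) = 0. Define φ(r) = sup{ξ : y(ξ') < y_Δ(2r − ξ') for all ξ' < ξ} and ψ(r) = 2r − φ(r). Then: (i) φ and ψ are increasing; (ii) φ − id and ψ − id are Lipschitz; (iii) 0 ≤ φ'(r) ≤ 2 and 0 ≤ ψ'(r) ≤ 2 for a.e. r; and (iv) y(φ(r)) = y_Δ(ψ(r)) for all r ∈ ℝ. -/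
open MeasureTheory Set Filter

lemma mono_deriv_nonneg' {f : ℝ → ℝ} (hf : Monotone f) {x : ℝ}
    (hx : DifferentiableAt ℝ f x) : 0 ≤ deriv f x := by
  have h := hx.hasDerivAt
  rw [hasDerivAt_iff_tendsto_slope] at h
  have h2 : Tendsto (slope f x) (nhdsWithin x (Ioi x)) (nhds (deriv f x)) :=
    h.mono_left (nhdsWithin_mono x (fun y hy => ne_of_gt hy))
  refine ge_of_tendsto h2 ?_
  filter_upwards [self_mem_nhdsWithin] with y hy
  rw [slope_def_field]
  exact div_nonneg (sub_nonneg.2 (hf hy.le)) (sub_nonneg.2 hy.le)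

/-- Properties of the rescaling pair `(φ, ψ)` matching two continuous increasing
characteristics `y` and `y_Δ`: `φ, ψ` are increasing, `φ − id` and `ψ − id` are Lipschitz,
`0 ≤ φ' ≤ 2` and `0 ≤ ψ' ≤ 2` a.e., and `y(φ(r)) = y_Δ(ψ(r))` for all `r`. -/
theorem rescaling_maps_properties
    (y yΔ : ℝ → ℝ)
    (hyc : Continuous y) (hyΔc : Continuous yΔ)
    (hym : Monotone y) (hyΔm : Monotone yΔ)
    (hyb : ∃ M : ℝ, ∀ ξ, |y ξ - ξ| ≤ M)
    (hyΔb : ∃ M : ℝ, ∀ ξ, |yΔ ξ - ξ| ≤ M)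
    (hlimT : Tendsto (fun ξ => y ξ - yΔ ξ) atTop (nhds 0))
    (hlimB : Tendsto (fun ξ => y ξ - yΔ ξ) atBot (nhds 0))
    (φ ψ : ℝ → ℝ)
    (hφ : ∀ r, φ r = sSup {ξ : ℝ | ∀ ξ' < ξ, y ξ' < yΔ (2 * r - ξ')})
    (hψ : ∀ r, ψ r = 2 * r - φ r) :
    Monotone φ ∧ Monotone ψ ∧
    (∃ K : NNReal, LipschitzWith K (fun r => φ r - r)) ∧
    (∃ K : NNReal, LipschitzWith K (fun r => ψ r - r)) ∧
    (∀ᵐ r : ℝ ∂volume, 0 ≤ deriv φ r ∧ deriv φ r ≤ 2) ∧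
    (∀ᵐ r : ℝ ∂volume, 0 ≤ deriv ψ r ∧ deriv ψ r ≤ 2) ∧
    (∀ r : ℝ, y (φ r) = yΔ (ψ r)) := by
  obtain ⟨M, hM⟩ := hyb
  obtain ⟨M', hM'⟩ := hyΔb
  set c : ℝ := (M + M') / 2 with hc
  set S : ℝ → Set ℝ := fun r => {ξ : ℝ | ∀ ξ' < ξ, y ξ' < yΔ (2 * r - ξ')} with hS
  -- basic bounds
  have hyle : ∀ ξ, y ξ ≤ ξ + M := fun ξ => by
    have := abs_le.1 (hM ξ); linarith [this.2]
  have hyge : ∀ ξ, ξ - M ≤ y ξ := fun ξ => by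
    have := abs_le.1 (hM ξ); linarith [this.1]
  have hyΔle : ∀ ξ, yΔ ξ ≤ ξ + M' := fun ξ => by
    have := abs_le.1 (hM' ξ); linarith [this.2]
  have hyΔge : ∀ ξ, ξ - M' ≤ yΔ ξ := fun ξ => by
    have := abs_le.1 (hM' ξ); linarith [this.1]
  -- nonempty
  have hmem : ∀ r, (r - c) ∈ S r := by
    intro r ξ' hξ'
    have h1 : y ξ' ≤ ξ' + M := hyle ξ'
    have h2 : 2 * r - ξ' - M' ≤ yΔ (2 * r - ξ') := hyΔge _
    have : ξ' + M < 2 * r - ξ' - M' := by simp only [hc] at hξ'; linarith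
    linarith
  have hne : ∀ r, (S r).Nonempty := fun r => ⟨r - c, hmem r⟩
  -- bounded above
  have hub : ∀ r, ∀ ξ ∈ S r, ξ ≤ r + c + 1 := by
    intro r ξ hξ
    by_contra hcon
    push_neg at hcon
    have hlt : r + c + 1 < ξ := hcon
    have := hξ (r + c + 1) hlt
    have h1 : r + c + 1 - M ≤ y (r + c + 1) := hyge _
    have h2 : yΔ (2 * r - (r + c + 1)) ≤ 2 * r - (r + c + 1) + M' := hyΔle _
    simp only [hc] at h1 h2
    linarith
  have hbdd : ∀ r, BddAbove (S r) := fun r => ⟨r + c + 1, fun ξ hξ => hub r ξ hξ⟩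
  -- monotone φ
  have hmono : Monotone φ := by
    intro r s hrs
    rw [hφ r, hφ s]
    refine csSup_le_csSup (hbdd s) (hne r) ?_
    intro ξ hξ ξ' hξ'
    exact lt_of_lt_of_le (hξ ξ' hξ') (hyΔm (by linarith))
  -- key Lipschitz-type bound
  have hkey : ∀ r s, r ≤ s → φ s ≤ φ r + 2 * (s - r) := by
    intro r s hrs
    rw [hφ r, hφ s]
    refine csSup_le (hne s) ?_
    intro ξ hξ
    have hmem' : ξ - 2 * (s - r) ∈ S r := by
      intro ξ' hξ'
      have h1 : y (ξ' + 2 * (s - r)) < yΔ (2 * s - (ξ' + 2 * (s - r))) :=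
        hξ _ (by linarith)
      have h2 : y ξ' ≤ y (ξ' + 2 * (s - r)) := hym (by linarith)
      have h3 : (2 : ℝ) * s - (ξ' + 2 * (s - r)) = 2 * r - ξ' := by ring
      rw [h3] at h1
      exact lt_of_le_of_lt h2 h1
    have := le_csSup (hbdd r) hmem'
    linarith
  -- monotone ψ
  have hψmono : Monotone ψ := by
    intro r s hrs
    rw [hψ r, hψ s]
    have := hkey r s hrs
    linarith
  -- upper bound: φ s - φ r ≤ 2 (s - r), lower: ≥ 0
  have hlip1 : LipschitzWith 1 (fun r => φ r - r) := by
    refine LipschitzWith.of_dist_le_mul ?_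
    intro r s
    simp only [Real.dist_eq, NNReal.coe_one, one_mul]
    rcases le_total r s with h | h
    · have h1 := hmono h
      have h2 := hkey r s h
      have hrs' : |r - s| = s - r := by
        rw [abs_sub_comm]; exact abs_of_nonneg (by linarith)
      rw [hrs', abs_le]
      constructor <;> linarith
    · have h1 := hmono h
      have h2 := hkey s r h
      have hrs' : |r - s| = r - s := abs_of_nonneg (by linarith)
      rw [hrs', abs_le]
      constructor <;> linarith
  have hψid : (fun r => ψ r - r) = fun r => -(φ r - r) := by
    funext r; rw [hψ r]; ring
  have hlip2 : LipschitzWith 1 (fun r => ψ r - r) := by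
    rw [hψid]; exact hlip1.neg
  -- a.e. differentiability and deriv computations
  have hψeq : ψ = fun r => 2 * r - φ r := funext hψ
  have hderiv : ∀ r, DifferentiableAt ℝ φ r →
      DifferentiableAt ℝ ψ r ∧ deriv ψ r = 2 - deriv φ r := by
    intro r hd
    have hid : DifferentiableAt ℝ (fun r : ℝ => 2 * r) r := by
      exact (differentiable_id.const_mul 2).differentiableAt
    constructor
    · rw [hψeq]; exact hid.sub hd
    · rw [hψeq, deriv_fun_sub hid hd]
      have h2 : deriv (fun r : ℝ => 2 * r) r = 2 := by
        simpa using ((hasDerivAt_id r).const_mul (2:ℝ)).deriv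
      rw [h2]
  have hae1 : ∀ᵐ r : ℝ ∂volume, 0 ≤ deriv φ r ∧ deriv φ r ≤ 2 := by
    filter_upwards [hmono.ae_differentiableAt] with r hd
    refine ⟨mono_deriv_nonneg' hmono hd, ?_⟩
    obtain ⟨hd2, heq⟩ := hderiv r hd
    have := mono_deriv_nonneg' hψmono hd2
    rw [heq] at this
    linarith
  have hae2 : ∀ᵐ r : ℝ ∂volume, 0 ≤ deriv ψ r ∧ deriv ψ r ≤ 2 := by
    filter_upwards [hmono.ae_differentiableAt] with r hd
    obtain ⟨hd2, heq⟩ := hderiv r hd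
    have h1 := mono_deriv_nonneg' hψmono hd2
    have h2 := mono_deriv_nonneg' hmono hd
    rw [heq] at h1 ⊢
    exact ⟨h1, by linarith⟩
  -- the matching identity
  have hmatch : ∀ r : ℝ, y (φ r) = yΔ (ψ r) := by
    intro r
    -- strict inequality below the sup
    have hstrict : ∀ ξ' < φ r, y ξ' < yΔ (2 * r - ξ') := by
      intro ξ' hξ'
      rw [hφ r] at hξ'
      obtain ⟨ξ, hξS, hlt⟩ := exists_lt_of_lt_csSup (hne r) hξ'
      exact hξS ξ' hlt
    set g : ℝ → ℝ := fun ξ => yΔ (2 * r - ξ) - y ξ with hg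
    have hgc : Continuous g := by
      exact (hyΔc.comp (by continuity)).sub hyc
    -- g (φ r) ≥ 0 by left limits
    have hge : 0 ≤ g (φ r) := by
      have ht : Tendsto g (nhdsWithin (φ r) (Iio (φ r))) (nhds (g (φ r))) :=
        (hgc.tendsto (φ r)).mono_left nhdsWithin_le_nhds
      refine ge_of_tendsto ht ?_
      filter_upwards [self_mem_nhdsWithin] with ξ' hξ'
      have := hstrict ξ' hξ'
      show (0:ℝ) ≤ yΔ (2 * r - ξ') - y ξ'
      linarith
    -- g (φ r) ≤ 0 by maximality of the sup
    have hle : ¬ (0 < g (φ r)) := by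
      intro hpos
      have hev : ∀ᶠ ξ in nhds (φ r), 0 < g ξ :=
        (hgc.tendsto (φ r)).eventually (lt_mem_nhds hpos)
      obtain ⟨δ, hδ, hball⟩ := Metric.eventually_nhds_iff.1 hev
      have hmem' : φ r + δ / 2 ∈ S r := by
        intro ξ' hξ'
        rcases lt_or_ge ξ' (φ r) with h | h
        · exact hstrict ξ' h
        · have : dist ξ' (φ r) < δ := by
            rw [Real.dist_eq, abs_of_nonneg (by linarith)]
            linarith
          have hg' : 0 < yΔ (2 * r - ξ') - y ξ' := hball this
          linarith
      have hSr : sSup (S r) = φ r := (hφ r).symm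
      have h2 := le_csSup (hbdd r) hmem'
      rw [hSr] at h2
      linarith
    have h0 : yΔ (2 * r - φ r) - y (φ r) = 0 := le_antisymm (not_lt.1 hle) hge
    rw [hψ r]
    linarith
  exact ⟨hmono, hψmono, ⟨1, hlip1⟩, ⟨1, hlip2⟩, hae1, hae2, hmatch⟩
end

section
/- Let G, G_Δ : ℝ → ℝ be bounded, increasing, left-continuous with limits 0 at −∞, let y(ξ) = sup{x : x + G(x) < ξ}, y_Δ(ξ) = sup{x : x + G_Δ(x) < ξ}, and let φ, ψ be defined by φ(r) = sup{ξ : y(ξ') < y_Δ(2r − ξ') for all ξ' < ξ}, ψ(r) = 2r − φ(r). Then the function 𝒴(r) := y(φ(r)) satisfies 𝒴(r) = sup{x ∈ ℝ : x + ½(G + G_Δ)(x) < r} for all r ∈ ℝ. -/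
/-!
The labeling map `c ↦ sup {x | x + f x < c}` of a bounded monotone `f` is the generalized inverse
of the strictly increasing map `x ↦ x + f x`, hence monotone and 1-Lipschitz. So
`ξ ↦ y_Δ(2r - ξ) - y(ξ)` is continuous, and `φ(r)` is a crossing point:
`y(φ(r)) = y_Δ(2r - φ(r)) =: Y`.
Below `Y` both `x + G x < φ(r)` and `x + G_Δ x < 2r - φ(r)`, above `Y` both reverse; adding,
`x + ½(G + G_Δ)(x) < r` holds exactly below `Y`, so `Y` is the supremum.
-/

open MeasureTheory Set Filter

open scoped Topology

/-- In the paper's notation `y = labeling G` and `y_Δ = labeling G_Δ`. -/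
noncomputable def labeling (f : ℝ → ℝ) (c : ℝ) : ℝ :=
  sSup {x | x + f x < c}

noncomputable def firstCrossing (u v : ℝ → ℝ) : ℝ :=
  sSup {ξ | ∀ ξ' < ξ, u ξ' < v ξ'}

theorem labeling_eq_of_forall {f : ℝ → ℝ} {c x : ℝ} (hlt : ∀ z < x, z + f z < c)
    (hle : ∀ z, x < z → c ≤ z + f z) : labeling f c = x := by
  refine IsLUB.csSup_eq ⟨fun z hz => not_lt.1 fun hxz => (hle z hxz).not_gt hz,
    fun b hb => le_of_forall_lt_imp_le_of_dense fun z hz => hb (hlt z hz)⟩ ?_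
  exact ⟨x - 1, hlt _ (sub_one_lt x)⟩

section Labeling

variable {f : ℝ → ℝ} {M : ℝ}

theorem labeling_set_nonempty (hM : ∀ x, |f x| ≤ M) (c : ℝ) :
    {x | x + f x < c}.Nonempty :=
  ⟨c - M - 1, show _ + _ < c by linarith [(abs_le.1 (hM (c - M - 1))).2]⟩

theorem labeling_set_bddAbove (hM : ∀ x, |f x| ≤ M) (c : ℝ) :
    BddAbove {x | x + f x < c} :=
  ⟨c + M, fun x (hx : x + f x < c) => by linarith [(abs_le.1 (hM x)).1]⟩

theorem le_labeling (hM : ∀ x, |f x| ≤ M) {c x : ℝ} (h : x + f x < c) : x ≤ labeling f c :=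
  le_csSup (labeling_set_bddAbove hM c) h

theorem le_add_of_labeling_lt (hM : ∀ x, |f x| ≤ M) {c x : ℝ} (h : labeling f c < x) :
    c ≤ x + f x :=
  not_lt.1 fun hx => (le_labeling hM hx).not_gt h

theorem add_lt_of_lt_labeling (hM : ∀ x, |f x| ≤ M) (hf : Monotone f) {c x : ℝ}
    (h : x < labeling f c) : x + f x < c := by
  obtain ⟨z, hz : z + f z < c, hxz⟩ := exists_lt_of_lt_csSup (labeling_set_nonempty hM c) h
  linarith [hf hxz.le]

theorem labeling_le (hM : ∀ x, |f x| ≤ M) (hf : Monotone f) {c x : ℝ} (h : c ≤ x + f x) :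
    labeling f c ≤ x :=
  le_of_forall_lt fun _ hz => not_le.1 fun hxz => (add_lt_of_lt_labeling hM hf hz).not_ge
    (h.trans (by linarith [hf hxz]))

theorem abs_labeling_sub_le (hM : ∀ x, |f x| ≤ M) (hf : Monotone f) (c : ℝ) :
    |labeling f c - c| ≤ M := by
  have hlo : c - M ≤ labeling f c :=
    le_of_forall_lt_imp_le_of_dense fun x hx =>
      le_labeling hM (by linarith [(abs_le.1 (hM x)).2])
  have hup : labeling f c ≤ c + M := labeling_le hM hf (by linarith [(abs_le.1 (hM (c + M))).1])
  exact abs_le.2 ⟨by linarith, by linarith⟩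

theorem labeling_mono (hM : ∀ x, |f x| ≤ M) : Monotone (labeling f) := fun _ d hcd =>
  csSup_le_csSup (labeling_set_bddAbove hM d) (labeling_set_nonempty hM _)
    fun x (hx : x + f x < _) => show x + f x < d by linarith

theorem labeling_add_le (hM : ∀ x, |f x| ≤ M) (hf : Monotone f) (c : ℝ) {h : ℝ} (hh : 0 ≤ h) :
    labeling f (c + h) ≤ labeling f c + h :=
  csSup_le (labeling_set_nonempty hM _) fun x (hx : x + f x < c + h) => by
    have : x - h ≤ labeling f c := le_labeling hM (by linarith [hf (sub_le_self x hh)])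
    linarith

theorem labeling_lipschitz (hM : ∀ x, |f x| ≤ M) (hf : Monotone f) :
    LipschitzWith 1 (labeling f) :=
  .of_le_add fun c d => calc
    labeling f c ≤ labeling f (d + dist c d) :=
      labeling_mono hM (by linarith [Real.dist_eq c d ▸ le_abs_self (c - d)])
    _ ≤ labeling f d + dist c d := labeling_add_le hM hf d dist_nonneg

end Labeling

theorem apply_firstCrossing_eq {u v : ℝ → ℝ} (hu : Continuous u) (hv : Continuous v)
    {a b : ℝ} (ha : ∀ ξ ≤ a, u ξ < v ξ) (hb : v b ≤ u b) :
    u (firstCrossing u v) = v (firstCrossing u v) := by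
  set T := {ξ | ∀ ξ' < ξ, u ξ' < v ξ'}
  have hne : T.Nonempty := ⟨a, fun ξ' hξ' => ha ξ' hξ'.le⟩
  have hbdd : BddAbove T := ⟨b, fun ξ hξ => not_lt.1 fun hbξ => (hξ b hbξ).not_ge hb⟩
  have hbelow : ∀ ξ' < firstCrossing u v, u ξ' < v ξ' := fun ξ' hξ' => by
    obtain ⟨ξ, hξ, hξ'ξ⟩ := exists_lt_of_lt_csSup hne hξ'
    exact hξ ξ' hξ'ξ
  refine le_antisymm ?_ (not_lt.1 fun hlt => ?_)
  · have hleft : ∀ᶠ ξ in 𝓝[<] firstCrossing u v, u ξ ≤ v ξ :=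
      eventually_nhdsWithin_of_forall fun ξ hξ => (hbelow ξ hξ).le
    exact le_of_tendsto_of_tendsto (hu.tendsto _ |>.mono_left nhdsWithin_le_nhds)
      (hv.tendsto _ |>.mono_left nhdsWithin_le_nhds) hleft
  · obtain ⟨t, hst, ht⟩ := exists_Ico_subset_of_mem_nhds ((isOpen_lt hu hv).mem_nhds hlt)
      (exists_gt _)
    have htT : t ∈ T := fun ξ' hξ' =>
      (lt_or_ge ξ' (firstCrossing u v)).elim (hbelow ξ') fun hsξ' => ht ⟨hsξ', hξ'⟩
    exact (le_csSup hbdd htT).not_gt hst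

theorem matched_characteristic_eq_average_general
    (G GΔ : ℝ → ℝ)
    (hGbdd : ∃ M : ℝ, ∀ x, |G x| ≤ M) (hGΔbdd : ∃ M : ℝ, ∀ x, |GΔ x| ≤ M)
    (hGm : Monotone G) (hGΔm : Monotone GΔ)
    (y yΔ : ℝ → ℝ)
    (hy : ∀ ξ, y ξ = sSup {x : ℝ | x + G x < ξ})
    (hyΔ : ∀ ξ, yΔ ξ = sSup {x : ℝ | x + GΔ x < ξ})
    (φ : ℝ → ℝ)
    (hφ : ∀ r, φ r = sSup {ξ : ℝ | ∀ ξ' < ξ, y ξ' < yΔ (2 * r - ξ')}) :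
    ∀ r : ℝ, y (φ r) = sSup {x : ℝ | x + (G x + GΔ x) / 2 < r} := by
  obtain ⟨M, hM⟩ := hGbdd
  obtain ⟨MΔ, hMΔ⟩ := hGΔbdd
  obtain rfl : y = labeling G := funext hy
  obtain rfl : yΔ = labeling GΔ := funext hyΔ
  intro r
  have hbound := abs_labeling_sub_le hM hGm
  have hboundΔ := abs_labeling_sub_le hMΔ hGΔm
  have hcross : labeling G (φ r) = labeling GΔ (2 * r - φ r) :=
    hφ r ▸ apply_firstCrossing_eq (labeling_lipschitz hM hGm).continuous
      ((labeling_lipschitz hMΔ hGΔm).continuous.comp (continuous_const.sub continuous_id))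
      (a := r - (M + MΔ + 1) / 2) (b := r + (M + MΔ + 1) / 2)
      (fun ξ hξ => by
        linarith [(abs_le.1 (hbound ξ)).2, (abs_le.1 (hboundΔ (2 * r - ξ))).1])
      (by linarith [(abs_le.1 (hbound (r + (M + MΔ + 1) / 2))).1,
        (abs_le.1 (hboundΔ (2 * r - (r + (M + MΔ + 1) / 2)))).2])
  refine (labeling_eq_of_forall (f := fun x => (G x + GΔ x) / 2) (fun z hz => ?_)
    (fun z hz => ?_)).symm
  · have h := add_lt_of_lt_labeling hM hGm hz
    have hΔ := add_lt_of_lt_labeling hMΔ hGΔm (hcross ▸ hz)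
    linarith
  · have h := le_add_of_labeling_lt hM hz
    have hΔ := le_add_of_labeling_lt hMΔ (hcross ▸ hz)
    linarith

/-- The matched characteristic `𝒴(r) = y(φ(r))` is the Lagrangian labeling function
associated with the averaged cumulative energy `½(G + G_Δ)`:
`𝒴(r) = sup{x : x + ½(G(x) + G_Δ(x)) < r}`. -/
theorem matched_characteristic_eq_average
    (G GΔ : ℝ → ℝ)
    (hGbdd : ∃ M : ℝ, ∀ x, |G x| ≤ M) (hGΔbdd : ∃ M : ℝ, ∀ x, |GΔ x| ≤ M)
    (hGm : Monotone G) (hGΔm : Monotone GΔ)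
    (hGleft : ∀ x : ℝ, ContinuousWithinAt G (Set.Iio x) x)
    (hGΔleft : ∀ x : ℝ, ContinuousWithinAt GΔ (Set.Iio x) x)
    (hGlim : Tendsto G atBot (nhds 0)) (hGΔlim : Tendsto GΔ atBot (nhds 0))
    (y yΔ : ℝ → ℝ)
    (hy : ∀ ξ, y ξ = sSup {x : ℝ | x + G x < ξ})
    (hyΔ : ∀ ξ, yΔ ξ = sSup {x : ℝ | x + GΔ x < ξ})
    (φ ψ : ℝ → ℝ)
    (hφ : ∀ r, φ r = sSup {ξ : ℝ | ∀ ξ' < ξ, y ξ' < yΔ (2 * r - ξ')})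
    (hψ : ∀ r, ψ r = 2 * r - φ r) :
    ∀ r : ℝ, y (φ r) = sSup {x : ℝ | x + (G x + GΔ x) / 2 < r} :=
  matched_characteristic_eq_average_general G GΔ hGbdd hGΔbdd hGm hGΔm y yΔ hy hyΔ φ hφ
end

section
/- Let u, u_Δ : ℝ → ℝ be bounded continuous functions, y, y_Δ : ℝ → ℝ continuous increasing surjections, and U = u ∘ y, U_Δ = u_Δ ∘ y_Δ. Suppose there is a constant E ≥ 0 such that |u(x) − u(x')| ≤ E·|x − x'|^{1/2} for all x, x' (u is ½-Hölder with constant E). Then ‖u − u_Δ‖_∞ ≤ ‖U − U_Δ‖_∞ + E·‖y − y_Δ‖_∞^{1/2}. -/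
/-! Every Eulerian point `x` is `y_Δ ξ` for some Lagrangian label `ξ`; comparing `u` with `u_Δ`
there through the intermediate value `u (y ξ) = U ξ` splits the error into the Lagrangian error
`|U ξ − U_Δ ξ|` and the oscillation of `u` over a distance `|y ξ − y_Δ ξ|`, which the Hölder
bound controls. -/

theorem dist_le_add_of_surjective_reparam {Ξ X Y : Type*} [PseudoMetricSpace X]
    [PseudoMetricSpace Y] {u uΔ : X → Y} {y yΔ : Ξ → X} (hyΔ : Function.Surjective yΔ)
    {CU δ ε : ℝ} (hU : ∀ ξ, dist (u (y ξ)) (uΔ (yΔ ξ)) ≤ CU)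
    (hy : ∀ ξ, dist (y ξ) (yΔ ξ) ≤ δ) (hu : ∀ x x', dist x x' ≤ δ → dist (u x) (u x') ≤ ε)
    (x : X) : dist (u x) (uΔ x) ≤ CU + ε := by
  obtain ⟨ξ, rfl⟩ := hyΔ x
  calc dist (u (yΔ ξ)) (uΔ (yΔ ξ))
      ≤ dist (u (yΔ ξ)) (u (y ξ)) + dist (u (y ξ)) (uΔ (yΔ ξ)) := dist_triangle _ _ _
    _ ≤ ε + CU := add_le_add (hu _ _ (dist_comm (y ξ) _ ▸ hy ξ)) (hU ξ)
    _ = CU + ε := add_comm _ _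

theorem abs_sub_le_of_half_holder {u : ℝ → ℝ} {E : ℝ} (hE : 0 ≤ E)
    (hhold : ∀ x x' : ℝ, |u x - u x'| ≤ E * |x - x'| ^ ((1 : ℝ) / 2)) {δ x x' : ℝ}
    (hxx' : |x - x'| ≤ δ) : |u x - u x'| ≤ E * δ ^ ((1 : ℝ) / 2) :=
  (hhold x x').trans <| mul_le_mul_of_nonneg_left
    (Real.rpow_le_rpow (abs_nonneg _) hxx' (by norm_num)) hE

theorem eulerian_sup_bound_from_lagrangian_general
    (u uΔ : ℝ → ℝ) (y yΔ : ℝ → ℝ) (U UΔ : ℝ → ℝ) (E : ℝ)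
    (hyΔs : Function.Surjective yΔ)
    (hU : ∀ ξ, U ξ = u (y ξ)) (hUΔ : ∀ ξ, UΔ ξ = uΔ (yΔ ξ))
    (hE : 0 ≤ E)
    (hhold : ∀ x x' : ℝ, |u x - u x'| ≤ E * |x - x'| ^ ((1 : ℝ) / 2)) :
    ∀ CU Cy : ℝ, (∀ ξ, |U ξ - UΔ ξ| ≤ CU) → (∀ ξ, |y ξ - yΔ ξ| ≤ Cy) →
      ∀ x : ℝ, |u x - uΔ x| ≤ CU + E * Cy ^ ((1 : ℝ) / 2) := by
  intro CU Cy hCU hCy x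
  simp only [← Real.dist_eq] at hCU hCy ⊢
  refine dist_le_add_of_surjective_reparam hyΔs (fun ξ ↦ ?_) hCy
    (fun _ _ ↦ abs_sub_le_of_half_holder hE hhold) x
  simpa only [hU, hUΔ] using hCU ξ

/-- Transfer of sup-norm bounds from Lagrangian to Eulerian variables:
if `u` is `½`-Hölder with constant `E`, `y, y_Δ` are continuous increasing surjections,
`U = u ∘ y`, `U_Δ = u_Δ ∘ y_Δ`, and `CU, Cy` bound `|U − U_Δ|` and `|y − y_Δ|`, then
`‖u − u_Δ‖_∞ ≤ CU + E·Cy^{1/2}`. -/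
theorem eulerian_sup_bound_from_lagrangian
    (u uΔ : ℝ → ℝ) (y yΔ : ℝ → ℝ) (U UΔ : ℝ → ℝ) (E : ℝ)
    (huc : Continuous u) (huΔc : Continuous uΔ)
    (hub : ∃ M : ℝ, ∀ x, |u x| ≤ M) (huΔb : ∃ M : ℝ, ∀ x, |uΔ x| ≤ M)
    (hyc : Continuous y) (hyΔc : Continuous yΔ)
    (hym : Monotone y) (hyΔm : Monotone yΔ)
    (hys : Function.Surjective y) (hyΔs : Function.Surjective yΔ)
    (hU : ∀ ξ, U ξ = u (y ξ)) (hUΔ : ∀ ξ, UΔ ξ = uΔ (yΔ ξ))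
    (hE : 0 ≤ E)
    (hhold : ∀ x x' : ℝ, |u x - u x'| ≤ E * |x - x'| ^ ((1 : ℝ) / 2)) :
    ∀ CU Cy : ℝ, (∀ ξ, |U ξ - UΔ ξ| ≤ CU) → (∀ ξ, |y ξ - yΔ ξ| ≤ Cy) →
      ∀ x : ℝ, |u x - uΔ x| ≤ CU + E * Cy ^ ((1 : ℝ) / 2) :=
  eulerian_sup_bound_from_lagrangian_general u uΔ y yΔ U UΔ E hyΔs hU hUΔ hE hhold
end

section
/- Let G : ℝ → ℝ be bounded, increasing, left-continuous with lim_{x→−∞} G(x) = 0, set y(ξ) = sup{x : x + G(x) < ξ} and H(ξ) = ξ − y(ξ). Then H is increasing, Lipschitz with constant 1, and lim_{ξ→∞} H(ξ) = lim_{x→∞} G(x). -/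
open Set Filter

/-!
The sublevel sets `{x | x + G x < ξ}` are bounded above because `G` is increasing, and are
nonempty because `G ≤ G_∞`. Since `x ↦ x + G x` grows at least as fast as `x`, raising the level
by `h` moves their supremum `y` by at most `h`; hence `ξ - y ξ` is increasing, and it is
`1`-Lipschitz because `y` is increasing too. Finally `ξ - G_∞ ≤ y ξ`, while once `G > b` on
`[X, ∞)` we get `y ξ ≤ max X (ξ - b)`, which squeezes `H` to `G_∞`.
-/

namespace Lagrangian

/-- The Lagrangian characteristic `y`. -/
noncomputable def char (G : ℝ → ℝ) (ξ : ℝ) : ℝ := sSup {x | x + G x < ξ}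

/-- The Lagrangian cumulative energy `H`. -/
noncomputable def energy (G : ℝ → ℝ) (ξ : ℝ) : ℝ := ξ - char G ξ

variable {G : ℝ → ℝ} {c : ℝ}

theorem bddAbove_setOf_add_lt (hG : Monotone G) (ξ : ℝ) : BddAbove {x | x + G x < ξ} := by
  refine ⟨max 0 (ξ - G 0), fun x (hx : x + G x < ξ) => ?_⟩
  rcases le_total x 0 with hx0 | hx0
  · exact le_max_of_le_left hx0
  · exact le_max_of_le_right (by linarith [hG hx0])

theorem sub_sub_one_mem_setOf_add_lt (hc : ∀ x, G x ≤ c) (ξ : ℝ) :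
    ξ - c - 1 ∈ {x | x + G x < ξ} :=
  show _ < ξ by linarith [hc (ξ - c - 1)]

theorem monotone_char (hG : Monotone G) (hc : ∀ x, G x ≤ c) : Monotone (char G) :=
  fun _ b hab => csSup_le_csSup (bddAbove_setOf_add_lt hG b)
    ⟨_, sub_sub_one_mem_setOf_add_lt hc _⟩ fun _ hx => lt_of_lt_of_le hx hab

theorem char_le_add_sub (hG : Monotone G) (hc : ∀ x, G x ≤ c) {a b : ℝ} (hab : a ≤ b) :
    char G b ≤ char G a + (b - a) := by
  refine csSup_le ⟨_, sub_sub_one_mem_setOf_add_lt hc b⟩ fun x (hx : x + G x < b) => ?_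
  have hshift : x - (b - a) ∈ {x | x + G x < a} :=
    show _ < a by linarith [hG (show x - (b - a) ≤ x by linarith)]
  have : x - (b - a) ≤ char G a := le_csSup (bddAbove_setOf_add_lt hG a) hshift
  linarith

theorem sub_le_char (hG : Monotone G) (hc : ∀ x, G x ≤ c) (ξ : ℝ) : ξ - c ≤ char G ξ := by
  refine le_of_forall_pos_le_add fun ε hε => ?_
  have hmem : ξ - c - ε ∈ {x | x + G x < ξ} := show _ < ξ by linarith [hc (ξ - c - ε)]
  have : ξ - c - ε ≤ char G ξ := le_csSup (bddAbove_setOf_add_lt hG ξ) hmem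
  linarith

theorem char_le_max (hc : ∀ x, G x ≤ c) {X b : ℝ} (hb : ∀ x, X ≤ x → b < G x) (ξ : ℝ) :
    char G ξ ≤ max X (ξ - b) := by
  refine csSup_le ⟨_, sub_sub_one_mem_setOf_add_lt hc ξ⟩ fun x (hx : x + G x < ξ) => ?_
  rcases le_total x X with hxX | hxX
  · exact le_max_of_le_left hxX
  · exact le_max_of_le_right (by linarith [hb x hxX])

theorem monotone_energy (hG : Monotone G) (hc : ∀ x, G x ≤ c) : Monotone (energy G) :=
  fun _ _ hab => by
    have := char_le_add_sub hG hc hab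
    simp only [energy]
    linarith

theorem energy_le (hG : Monotone G) (hc : ∀ x, G x ≤ c) (ξ : ℝ) : energy G ξ ≤ c := by
  have := sub_le_char hG hc ξ
  simp only [energy]
  linarith

theorem lipschitzWith_one_sub_of_monotone {f : ℝ → ℝ} (hf : Monotone f)
    (hsub : Monotone fun x => x - f x) : LipschitzWith 1 fun x => x - f x := by
  refine LipschitzWith.of_le_add_mul 1 fun a b => ?_
  rw [NNReal.coe_one, one_mul, Real.dist_eq]
  rcases le_total a b with hab | hab
  · have := hsub hab
    linarith [abs_nonneg (a - b)]
  · have := hf hab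
    linarith [le_abs_self (a - b)]

theorem lipschitzWith_energy (hG : Monotone G) (hc : ∀ x, G x ≤ c) :
    LipschitzWith 1 (energy G) :=
  lipschitzWith_one_sub_of_monotone (monotone_char hG hc) (monotone_energy hG hc)

theorem tendsto_energy (hG : Monotone G) (hlim : Tendsto G atTop (nhds c)) :
    Tendsto (energy G) atTop (nhds c) := by
  have hc : ∀ x, G x ≤ c := hG.ge_of_tendsto hlim
  refine tendsto_order.2 ⟨fun a ha => ?_, fun a ha => Eventually.of_forall fun ξ =>
    (energy_le hG hc ξ).trans_lt ha⟩
  obtain ⟨b, hab, hbc⟩ := exists_between ha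
  obtain ⟨X, hX⟩ := eventually_atTop.1 (hlim.eventually (eventually_gt_nhds hbc))
  filter_upwards [eventually_ge_atTop (X + b)] with ξ hξ
  have : char G ξ ≤ ξ - b := (char_le_max hc hX ξ).trans (max_le (by linarith) le_rfl)
  simp only [energy]
  linarith

end Lagrangian

open Lagrangian in
theorem lagrangian_energy_properties_general
    (G : ℝ → ℝ) (Ginf : ℝ)
    (hmono : Monotone G)
    (hlimT : Tendsto G atTop (nhds Ginf))
    (y H : ℝ → ℝ)
    (hy : ∀ ξ, y ξ = sSup {x : ℝ | x + G x < ξ})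
    (hH : ∀ ξ, H ξ = ξ - y ξ) :
    Monotone H ∧ LipschitzWith 1 H ∧ Tendsto H atTop (nhds Ginf) := by
  have hH : H = energy G := funext fun ξ => by rw [hH, hy]; rfl
  subst hH
  have hc : ∀ x, G x ≤ Ginf := hmono.ge_of_tendsto hlimT
  exact ⟨monotone_energy hmono hc, lipschitzWith_energy hmono hc, tendsto_energy hmono hlimT⟩

/-- For `G` bounded, increasing, left-continuous with `G → 0` at `−∞` and `G → G_∞`
at `+∞`, with `y(ξ) = sup{x : x + G(x) < ξ}` and `H(ξ) = ξ − y(ξ)`, the function `H`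
is increasing, `1`-Lipschitz, and `H(ξ) → G_∞` as `ξ → ∞`. -/
theorem lagrangian_energy_properties
    (G : ℝ → ℝ) (Ginf : ℝ)
    (hbdd : ∃ M : ℝ, ∀ x, |G x| ≤ M)
    (hmono : Monotone G)
    (hleft : ∀ x : ℝ, ContinuousWithinAt G (Set.Iio x) x)
    (hlimB : Tendsto G atBot (nhds 0))
    (hlimT : Tendsto G atTop (nhds Ginf))
    (y H : ℝ → ℝ)
    (hy : ∀ ξ, y ξ = sSup {x : ℝ | x + G x < ξ})
    (hH : ∀ ξ, H ξ = ξ - y ξ) :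
    Monotone H ∧ LipschitzWith 1 H ∧ Tendsto H atTop (nhds Ginf) :=
  lagrangian_energy_properties_general G Ginf hmono hlimT y H hy hH
end
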